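/- arXiv:1811.04121 — 6 statements merged into one kernel-verified Lean document; each statement's English description precedes it below -/
import Mathlib

section
/- Let Z be a standard normal random variable on ℝ. Then for every t ≥ 0, the tail probability satisfies P(Z > t) ≤ exp(-t²/2) / √(2π t² + 4). -/
/-!
Write `φ` for the standard normal density and let `0 < c ≤ 2 / π`. The gap
`D t = φ t / √(t ^ 2 + c) - ∫ x in Ioi t, φ x` satisfies `D 0 ≥ 0` (this is where `c ≤ 2 / π`
enters, as `∫ x in Ioi 0, φ x = 1 / 2`), tends to `0` at infinity, and has derivative
`φ t * (s ^ 3 - t * (t ^ 2 + c + 1)) / s ^ 3` with `s = √(t ^ 2 + c)`. For `t ≥ 0`, squaring shows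
that `D' t` has the sign of `(v + c) ^ 3 - v * (v + c + 1) ^ 2` at `v = t ^ 2`, a polynomial that
decreases on `v ≥ 0` as soon as `c ≤ 1`. So `D` first increases and then decreases towards its
limit `0`, and never becomes negative. The theorem is the case `c = 2 / π`.
-/

open MeasureTheory ProbabilityTheory Set Filter Topology

theorem nonneg_of_hasDerivAt_of_tendsto_zero {f f' : ℝ → ℝ} {a t : ℝ}
    (hf : ∀ x, a ≤ x → HasDerivAt f (f' x) x) (hfa : 0 ≤ f a)
    (hf_lim : Tendsto f atTop (𝓝 0))
    (hf' : ∀ x y, a ≤ x → x ≤ y → f' x < 0 → f' y ≤ 0) (ht : a ≤ t) : 0 ≤ f t := by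
  by_contra! hft
  have hcont : ContinuousOn f (Ici a) := fun x hx => (hf x hx).continuousAt.continuousWithinAt
  obtain ⟨c, hc, hc_slope⟩ := exists_hasDerivAt_eq_slope f f'
    (ht.lt_of_ne (by rintro rfl; linarith)) (hcont.mono Icc_subset_Ici_self)
    fun x hx => hf x hx.1.le
  have hc_neg : f' c < 0 := by
    rw [hc_slope]; exact div_neg_of_neg_of_pos (by linarith) (by linarith [hc.1, hc.2])
  have hanti : AntitoneOn f (Ici t) := by
    refine antitoneOn_of_hasDerivWithinAt_nonpos (f' := f') (convex_Ici t)
      (hcont.mono (Ici_subset_Ici.2 ht)) (fun x hx => ?_) fun x hx => ?_ <;>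
      rw [interior_Ici] at hx
    · exact (hf x (ht.trans hx.le)).hasDerivWithinAt
    · exact hf' c x hc.1.le (hc.2.trans hx).le hc_neg
  have : 0 ≤ f t := le_of_tendsto hf_lim <| by
    filter_upwards [eventually_ge_atTop t] with x hx using hanti self_mem_Ici hx hx
  linarith

theorem hasDerivAt_integral_Ioi {E : Type*} [NormedAddCommGroup E] [NormedSpace ℝ E]
    [CompleteSpace E] {f : ℝ → E} (hf : Continuous f) (hfi : Integrable f) (t : ℝ) :
    HasDerivAt (fun t => ∫ x in Ioi t, f x) (-f t) t := by
  have h : (fun t => ∫ x in Ioi t, f x) = fun t => (∫ x in Ioi 0, f x) - ∫ x in 0..t, f x := by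
    ext t
    rw [← intervalIntegral.integral_Ioi_sub_Ioi' hfi.integrableOn hfi.integrableOn,
      sub_sub_cancel]
  rw [h, ← zero_sub]
  exact (hasDerivAt_const t _).sub (hf.integral_hasStrictDerivAt 0 t).hasDerivAt

theorem hasDerivAt_gaussianPDFReal (μ : ℝ) (v : NNReal) (x : ℝ) :
    HasDerivAt (gaussianPDFReal μ v) (-((x - μ) / v) * gaussianPDFReal μ v x) x := by
  have hsq : HasDerivAt (fun x => (x - μ) ^ 2) (2 * (x - μ)) x := by
    simpa using ((hasDerivAt_id x).sub_const μ).fun_pow 2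
  rw [gaussianPDFReal_def]
  refine ((hsq.fun_neg.div_const (2 * (v : ℝ))).exp.const_mul _).congr_deriv ?_
  simp only [neg_div, mul_div_mul_left _ _ (two_ne_zero' ℝ)]
  ring

theorem continuous_gaussianPDFReal (μ : ℝ) (v : NNReal) : Continuous (gaussianPDFReal μ v) :=
  continuous_iff_continuousAt.2 fun x => (hasDerivAt_gaussianPDFReal μ v x).continuousAt

theorem tendsto_gaussianPDFReal_atTop (μ : ℝ) (v : NNReal) :
    Tendsto (gaussianPDFReal μ v) atTop (𝓝 0) := by
  rcases eq_or_ne v 0 with rfl | hv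
  · rw [gaussianPDFReal_zero_var]; exact tendsto_const_nhds
  have harg : Tendsto (fun x => -(x - μ) ^ 2 / (2 * v)) atTop atBot := by
    simp only [neg_div]
    exact tendsto_neg_atTop_atBot.comp <| ((tendsto_pow_atTop two_ne_zero).comp
      (tendsto_atTop_add_const_right _ (-μ) tendsto_id)).atTop_div_const (by positivity)
  simpa [gaussianPDFReal_def] using (Real.tendsto_exp_atBot.comp harg).const_mul _

theorem integral_Ioi_gaussianPDFReal_zero {v : NNReal} (hv : v ≠ 0) :
    ∫ x in Ioi 0, gaussianPDFReal 0 v x = 1 / 2 := by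
  have hv' : (0 : ℝ) < v := by positivity
  have h : ∀ x, gaussianPDFReal 0 v x =
      (√(2 * Real.pi * v))⁻¹ * Real.exp (-(2 * (v : ℝ))⁻¹ * x ^ 2) := by
    intro x; rw [gaussianPDFReal_def]; ring_nf
  simp_rw [h, integral_const_mul, integral_gaussian_Ioi, div_inv_eq_mul,
    mul_left_comm Real.pi]
  have : √(2 * Real.pi * v) ≠ 0 := by positivity
  field_simp

theorem sqrt_pow_three_lt_of_le {c x y : ℝ} (hc₀ : 0 ≤ c) (hc₁ : c ≤ 1) (hx : 0 ≤ x)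
    (hxy : x ≤ y) (h : √(x ^ 2 + c) ^ 3 < x * (x ^ 2 + c + 1)) :
    √(y ^ 2 + c) ^ 3 < y * (y ^ 2 + c + 1) := by
  have hy : 0 ≤ y := hx.trans hxy
  have sq_sqrt_pow (z : ℝ) : (√(z ^ 2 + c) ^ 3) ^ 2 = (z ^ 2 + c) ^ 3 := by
    rw [← pow_mul, mul_comm, pow_mul, Real.sq_sqrt (by positivity)]
  have hx' : (x ^ 2 + c) ^ 3 < x ^ 2 * (x ^ 2 + c + 1) ^ 2 := by
    rw [← sq_sqrt_pow, ← mul_pow]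
    exact pow_lt_pow_left₀ h (by positivity) two_ne_zero
  have hy' : (y ^ 2 + c) ^ 3 < y ^ 2 * (y ^ 2 + c + 1) ^ 2 := by
    have hxy2 : x ^ 2 ≤ y ^ 2 := pow_le_pow_left₀ hx hxy 2
    -- `(v + c) ^ 3 - v * (v + c + 1) ^ 2 = c ^ 3 - (1 + 2 * c * (1 - c)) * v - (2 - c) * v ^ 2`
    nlinarith [mul_nonneg (sub_nonneg.2 hxy2)
      (by nlinarith : (0 : ℝ) ≤ (2 - c) * (x ^ 2 + y ^ 2) + 1 + 2 * c * (1 - c))]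
  refine lt_of_pow_lt_pow_left₀ 2 (by positivity) ?_
  rwa [sq_sqrt_pow, mul_pow]

theorem hasDerivAt_gaussianPDFReal_div_sqrt_sub_integral_Ioi {c : ℝ} (hc : 0 < c) (t : ℝ) :
    HasDerivAt
      (fun t => gaussianPDFReal 0 1 t / √(t ^ 2 + c) - ∫ x in Ioi t, gaussianPDFReal 0 1 x)
      (gaussianPDFReal 0 1 t * (√(t ^ 2 + c) ^ 3 - t * (t ^ 2 + c + 1)) / √(t ^ 2 + c) ^ 3) t := by
  have hs : 0 < √(t ^ 2 + c) := by positivity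
  have hsqrt := ((hasDerivAt_pow 2 t).add_const c).sqrt (by positivity)
  have hpdf := hasDerivAt_gaussianPDFReal 0 1 t
  simp only [NNReal.coe_one, sub_zero, div_one] at hpdf
  have htail := hasDerivAt_integral_Ioi (continuous_gaussianPDFReal 0 1)
    (integrable_gaussianPDFReal 0 1) t
  refine ((hpdf.div hsqrt hs.ne').sub htail).congr_deriv ?_
  have hsq : √(t ^ 2 + c) ^ 2 = t ^ 2 + c := Real.sq_sqrt (by positivity)
  field_simp
  rw [hsq]
  ring

theorem integral_Ioi_gaussianPDFReal_le_div_sqrt {c t : ℝ} (hc : 0 < c)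
    (hcπ : c ≤ 2 / Real.pi) (ht : 0 ≤ t) :
    ∫ x in Ioi t, gaussianPDFReal 0 1 x ≤ gaussianPDFReal 0 1 t / √(t ^ 2 + c) := by
  refine sub_nonneg.1 <| nonneg_of_hasDerivAt_of_tendsto_zero (f := fun t =>
    gaussianPDFReal 0 1 t / √(t ^ 2 + c) - ∫ x in Ioi t, gaussianPDFReal 0 1 x)
    (fun x _ => hasDerivAt_gaussianPDFReal_div_sqrt_sub_integral_Ioi hc x) ?_ ?_ ?_ ht
  · have h2πc : √(2 * Real.pi) * √c ≤ 2 := by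
      rw [← Real.sqrt_mul (by positivity), Real.sqrt_le_left (by norm_num)]
      nlinarith [(le_div_iff₀ Real.pi_pos).1 hcπ]
    rw [integral_Ioi_gaussianPDFReal_zero one_ne_zero, sub_nonneg, gaussianPDFReal_def]
    simp only [NNReal.coe_one, mul_one, sub_zero, zero_pow two_ne_zero, neg_zero, zero_div,
      Real.exp_zero, zero_add]
    rw [← one_div, div_div]
    exact one_div_le_one_div_of_le (by positivity) h2πc
  · have hsqrt : Tendsto (fun t => √(t ^ 2 + c)) atTop atTop :=
      Real.tendsto_sqrt_atTop.comp <| tendsto_atTop_add_const_right _ c <|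
        tendsto_pow_atTop two_ne_zero
    simpa using ((tendsto_gaussianPDFReal_atTop 0 1).div_atTop hsqrt).sub
      (tendsto_integral_Ioi_zero tendsto_id)
  · have hc₁ : c ≤ 1 := hcπ.trans <| (div_le_one Real.pi_pos).2 Real.two_le_pi
    intro x y hx hxy hneg
    have hx' : √(x ^ 2 + c) ^ 3 < x * (x ^ 2 + c + 1) := by
      by_contra! h
      exact hneg.not_ge <| div_nonneg
        (mul_nonneg (gaussianPDFReal_nonneg 0 1 x) (sub_nonneg.2 h)) (by positivity)
    exact div_nonpos_of_nonpos_of_nonneg (mul_nonpos_of_nonneg_of_nonpos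
      (gaussianPDFReal_nonneg 0 1 y)
      (sub_nonpos.2 (sqrt_pow_three_lt_of_le hc.le hc₁ hx hxy hx').le)) (by positivity)

/-- Gaussian tail bound: for `Z ~ N(0,1)` and `t ≥ 0`,
`P(Z > t) ≤ exp(-t²/2) / √(2π t² + 4)`. -/
theorem gaussian_tail_bound (t : ℝ) (ht : 0 ≤ t) :
    ((gaussianReal 0 1) {x : ℝ | t < x}).toReal ≤
      Real.exp (-t ^ 2 / 2) / Real.sqrt (2 * Real.pi * t ^ 2 + 4) := by
  have htail :
      ((gaussianReal 0 1) {x : ℝ | t < x}).toReal = ∫ x in Ioi t, gaussianPDFReal 0 1 x := by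
    change (gaussianReal 0 1 (Ioi t)).toReal = _
    rw [gaussianReal_apply_eq_integral 0 one_ne_zero, ENNReal.toReal_ofReal
      (setIntegral_nonneg measurableSet_Ioi fun x _ => gaussianPDFReal_nonneg 0 1 x)]
  have hbound : gaussianPDFReal 0 1 t / √(t ^ 2 + 2 / Real.pi) =
      Real.exp (-t ^ 2 / 2) / √(2 * Real.pi * t ^ 2 + 4) := by
    simp only [gaussianPDFReal_def, NNReal.coe_one, sub_zero, mul_one]
    rw [inv_mul_eq_div, div_div, ← Real.sqrt_mul (by positivity)]
    congr 2
    field_simp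
    ring
  rw [htail, ← hbound]
  exact integral_Ioi_gaussianPDFReal_le_div_sqrt (by positivity) le_rfl ht
end

section
/- Let Z be a standard normal random variable. Then for every t ≥ 0, E[(|Z| - t)₊] ≤ 2 exp(-t²/2) / (√(2π) (t² + 1)), where (x)₊ = max(x, 0). -/
/-!
Writing `φ x = exp (-x ^ 2 / 2)`, evenness gives `E[(|Z| - t)₊] = (2 / √(2π)) ∫ₜ^∞ (x - t) φ x dx`,
and `∫ₜ^∞ x φ x dx = φ t`, so the integral equals `φ t - t ∫ₜ^∞ φ`. Mills' lower bound
`∫ₜ^∞ φ ≥ t φ t / (t ^ 2 + 1)` then leaves at most `φ t / (t ^ 2 + 1)`.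
-/

open MeasureTheory ProbabilityTheory Real Filter Set Topology

lemma integrable_exp_neg_sq_div_two : Integrable fun x : ℝ ↦ exp (-x ^ 2 / 2) := by
  simpa [neg_div, div_eq_inv_mul, mul_comm] using
    integrable_exp_neg_mul_sq (by norm_num : (0:ℝ) < 1 / 2)

lemma integrable_mul_exp_neg_sq_div_two : Integrable fun x : ℝ ↦ x * exp (-x ^ 2 / 2) := by
  simpa [neg_div, div_eq_inv_mul, mul_comm] using
    integrable_mul_exp_neg_mul_sq (by norm_num : (0:ℝ) < 1 / 2)

lemma tendsto_exp_neg_sq_div_two_atTop : Tendsto (fun x : ℝ ↦ exp (-x ^ 2 / 2)) atTop (𝓝 0) := by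
  refine tendsto_exp_atBot.comp ?_
  simp_rw [neg_div]
  exact tendsto_neg_atTop_atBot.comp
    ((tendsto_pow_atTop two_ne_zero).atTop_div_const two_pos)

lemma integral_gaussianReal_zero_one (f : ℝ → ℝ) :
    ∫ x, f x ∂gaussianReal 0 1 = (√(2 * π))⁻¹ * ∫ x, f x * exp (-x ^ 2 / 2) := by
  rw [integral_gaussianReal_eq_integral_smul one_ne_zero, ← integral_const_mul]
  congr 1 with x
  simp [gaussianPDFReal]
  ring

lemma hasDerivAt_exp_neg_sq_div_two (x : ℝ) :
    HasDerivAt (fun y ↦ exp (-y ^ 2 / 2)) (-x * exp (-x ^ 2 / 2)) x := by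
  have h : HasDerivAt (fun y : ℝ ↦ -y ^ 2 / 2) (-x) x :=
    ((hasDerivAt_pow 2 x).fun_neg.div_const 2).congr_deriv (by norm_num; ring)
  simpa [mul_comm] using h.exp

lemma integral_Ioi_mul_exp_neg_sq_div_two (t : ℝ) :
    ∫ x in Ioi t, x * exp (-x ^ 2 / 2) = exp (-t ^ 2 / 2) := by
  have hderiv (x : ℝ) : HasDerivAt (fun y ↦ -exp (-y ^ 2 / 2)) (x * exp (-x ^ 2 / 2)) x := by
    simpa using (hasDerivAt_exp_neg_sq_div_two x).fun_neg
  rw [integral_Ioi_of_hasDerivAt_of_tendsto' (fun x _ ↦ hderiv x)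
    integrable_mul_exp_neg_sq_div_two.integrableOn tendsto_exp_neg_sq_div_two_atTop.neg]
  simp

lemma hasDerivAt_mul_exp_neg_sq_div_two_div (x : ℝ) :
    HasDerivAt (fun y ↦ y * exp (-y ^ 2 / 2) / (y ^ 2 + 1))
      (exp (-x ^ 2 / 2) * (2 / (x ^ 2 + 1) ^ 2 - 1)) x := by
  have hpos : x ^ 2 + 1 ≠ 0 := by positivity
  refine (((hasDerivAt_id' x).fun_mul (hasDerivAt_exp_neg_sq_div_two x)).fun_div
    ((hasDerivAt_pow 2 x).add_const 1) hpos).congr_deriv ?_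
  field_simp
  ring

/-- Mills' inequality: `g x = x φ x / (x ^ 2 + 1)` vanishes at infinity and
`-g' = φ (1 - 2 / (x ^ 2 + 1) ^ 2) ≤ φ`. -/
lemma mul_exp_neg_sq_div_two_div_le_integral_Ioi (t : ℝ) :
    t * exp (-t ^ 2 / 2) / (t ^ 2 + 1) ≤ ∫ x in Ioi t, exp (-x ^ 2 / 2) := by
  set g' : ℝ → ℝ := fun x ↦ exp (-x ^ 2 / 2) * (2 / (x ^ 2 + 1) ^ 2 - 1)
  have hbound (x : ℝ) : |2 / (x ^ 2 + 1) ^ 2 - 1| ≤ 1 := by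
    have h0 : 0 ≤ 2 / (x ^ 2 + 1) ^ 2 := by positivity
    have h2 : 2 / (x ^ 2 + 1) ^ 2 ≤ 2 := div_le_self zero_le_two (one_le_pow₀ (by nlinarith))
    rw [abs_le]; constructor <;> linarith
  have hg' : Integrable g' := by
    refine integrable_exp_neg_sq_div_two.mono (by fun_prop) (ae_of_all _ fun x ↦ ?_)
    simp only [g', norm_mul, Real.norm_eq_abs, abs_exp]
    exact mul_le_of_le_one_right (exp_nonneg _) (hbound x)
  have htendsto : Tendsto (fun x : ℝ ↦ x * exp (-x ^ 2 / 2) / (x ^ 2 + 1)) atTop (𝓝 0) := by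
    refine tendsto_of_tendsto_of_tendsto_of_le_of_le' tendsto_const_nhds
      tendsto_exp_neg_sq_div_two_atTop ?_ ?_ <;>
      filter_upwards [eventually_ge_atTop 0] with x hx
    · positivity
    · rw [div_le_iff₀ (by positivity)]
      nlinarith [exp_pos (-x ^ 2 / 2), sq_nonneg (x - 1)]
  have hftc := integral_Ioi_of_hasDerivAt_of_tendsto'
    (a := t) (fun x _ ↦ hasDerivAt_mul_exp_neg_sq_div_two_div x) hg'.integrableOn htendsto
  calc t * exp (-t ^ 2 / 2) / (t ^ 2 + 1) = ∫ x in Ioi t, -g' x := by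
        rw [integral_neg, hftc]; ring
    _ ≤ ∫ x in Ioi t, exp (-x ^ 2 / 2) := by
        refine setIntegral_mono hg'.integrableOn.neg integrable_exp_neg_sq_div_two.integrableOn
          fun x ↦ ?_
        have : 0 ≤ 2 / (x ^ 2 + 1) ^ 2 := by positivity
        simp only [g']
        nlinarith [exp_pos (-x ^ 2 / 2)]

lemma integral_Ioi_sub_mul_exp_neg_sq_div_two (t : ℝ) :
    ∫ x in Ioi t, (x - t) * exp (-x ^ 2 / 2) =
      exp (-t ^ 2 / 2) - t * ∫ x in Ioi t, exp (-x ^ 2 / 2) := by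
  simp_rw [sub_mul]
  rw [integral_sub integrable_mul_exp_neg_sq_div_two.integrableOn
    (integrable_exp_neg_sq_div_two.const_mul t).integrableOn, integral_const_mul,
    integral_Ioi_mul_exp_neg_sq_div_two]

lemma integral_Ioi_sub_mul_exp_neg_sq_div_two_le {t : ℝ} (ht : 0 ≤ t) :
    ∫ x in Ioi t, (x - t) * exp (-x ^ 2 / 2) ≤ exp (-t ^ 2 / 2) / (t ^ 2 + 1) := by
  have hmills := mul_le_mul_of_nonneg_left (mul_exp_neg_sq_div_two_div_le_integral_Ioi t) ht
  have hsplit : exp (-t ^ 2 / 2) / (t ^ 2 + 1) =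
      exp (-t ^ 2 / 2) - t * (t * exp (-t ^ 2 / 2) / (t ^ 2 + 1)) := by
    field_simp
    ring
  rw [integral_Ioi_sub_mul_exp_neg_sq_div_two, hsplit]
  linarith

lemma setIntegral_Ioi_zero_max_sub_mul (f : ℝ → ℝ) {t : ℝ} (ht : 0 ≤ t) :
    ∫ x in Ioi 0, max (x - t) 0 * f x = ∫ x in Ioi t, (x - t) * f x := by
  calc ∫ x in Ioi 0, max (x - t) 0 * f x = ∫ x in Ioi t, max (x - t) 0 * f x := by
        refine setIntegral_eq_of_subset_of_forall_sdiff_eq_zero measurableSet_Ioi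
          (Ioi_subset_Ioi ht) fun x hx ↦ ?_
        rw [max_eq_right (sub_nonpos.2 (not_lt.1 hx.2)), zero_mul]
    _ = ∫ x in Ioi t, (x - t) * f x := setIntegral_congr_fun measurableSet_Ioi fun x hx ↦ by
        rw [max_eq_left (sub_nonneg.2 (le_of_lt hx))]

/-- For `Z ~ N(0,1)` and `t ≥ 0`,
`E[(|Z| - t)₊] ≤ 2 exp(-t²/2) / (√(2π) (t² + 1))`. -/
theorem gaussian_positive_part_first_moment_bound (t : ℝ) (ht : 0 ≤ t) :
    (∫ x, max (|x| - t) 0 ∂(gaussianReal 0 1)) ≤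
      2 * Real.exp (-t ^ 2 / 2) / (Real.sqrt (2 * Real.pi) * (t ^ 2 + 1)) := by
  have heven : ∫ x, max (|x| - t) 0 * exp (-x ^ 2 / 2) =
      2 * ∫ x in Ioi t, (x - t) * exp (-x ^ 2 / 2) := by
    rw [← setIntegral_Ioi_zero_max_sub_mul _ ht,
      ← integral_comp_abs (f := fun y ↦ max (y - t) 0 * exp (-y ^ 2 / 2))]
    simp only [sq_abs]
  rw [integral_gaussianReal_zero_one, heven]
  calc (√(2 * π))⁻¹ * (2 * ∫ x in Ioi t, (x - t) * exp (-x ^ 2 / 2))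
      ≤ (√(2 * π))⁻¹ * (2 * (exp (-t ^ 2 / 2) / (t ^ 2 + 1))) := by
        gcongr
        exact integral_Ioi_sub_mul_exp_neg_sq_div_two_le ht
    _ = 2 * exp (-t ^ 2 / 2) / (√(2 * π) * (t ^ 2 + 1)) := by
        field_simp
end

section
/- Let z ~ N(0, I_n) be a standard Gaussian vector in ℝⁿ and let f : ℝⁿ → ℝⁿ be infinitely differentiable with compact support (each component f_i ∈ C_0^∞(ℝⁿ)). Then E[(zᵀ f(z) - div f(z))²] = E[‖f(z)‖² + tr((∇f(z))²)], where div f = Σᵢ ∂f_i/∂x_i and ∇f is the n×n matrix whose (j,i) entry is ∂f_i/∂x_j. -/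
open MeasureTheory ProbabilityTheory
section SteinAux
open Real
open scoped ENNReal NNReal

noncomputable def phi : ℝ → ℝ := gaussianPDFReal 0 1
lemma phi_nonneg (x : ℝ) : 0 ≤ phi x := gaussianPDFReal_nonneg 0 1 x
lemma phi_eq (x : ℝ) : phi x = (√(2 * π))⁻¹ * rexp (- x ^ 2 / 2) := by
  simp [phi, gaussianPDFReal]
lemma contDiff_phi : ContDiff ℝ (⊤ : ℕ∞) phi := by
  rw [show phi = fun x => (√(2 * π))⁻¹ * rexp (- x ^ 2 / 2) from funext phi_eq]
  exact contDiff_const.mul (((contDiff_id.pow 2).neg.div_const 2).exp)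
lemma hasDerivAt_phi (x : ℝ) : HasDerivAt phi (-x * phi x) x := by
  have h1 : HasDerivAt (fun x : ℝ => -x ^ 2 / 2) (-x) x := by
    have := ((hasDerivAt_pow 2 x).neg).div_const 2
    exact this.congr_deriv (by norm_num; ring)
  have h2 := (h1.exp).const_mul (√(2 * π))⁻¹
  have : (fun x : ℝ => (√(2 * π))⁻¹ * rexp (- x ^ 2 / 2)) = phi := (funext phi_eq).symm
  rw [this] at h2
  refine h2.congr_deriv ?_
  rw [phi_eq]; ring
lemma integrable_phi : Integrable phi := integrable_gaussianPDFReal 0 1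

noncomputable def Phi (n : ℕ) (z : Fin n → ℝ) : ℝ := ∏ j, phi (z j)

lemma Phi_nonneg (n : ℕ) (z : Fin n → ℝ) : 0 ≤ Phi n z :=
  Finset.prod_nonneg fun j _ => phi_nonneg _

lemma contDiff_Phi (n : ℕ) : ContDiff ℝ (⊤ : ℕ∞) (Phi n) := by
  unfold Phi
  exact contDiff_prod fun j _ => contDiff_phi.comp ((ContinuousLinearMap.proj j : (Fin n → ℝ) →L[ℝ] ℝ)).contDiff

lemma hasFDerivAt_Phi (n : ℕ) (z : Fin n → ℝ) :
    HasFDerivAt (Phi n) (∑ j, (∏ k ∈ Finset.univ.erase j, phi (z k)) •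
      ((-(z j) * phi (z j)) • (ContinuousLinearMap.proj j : (Fin n → ℝ) →L[ℝ] ℝ))) z := by
  have h : ∀ j ∈ Finset.univ, HasFDerivAt (fun z : Fin n → ℝ => phi (z j))
      ((-(z j) * phi (z j)) • (ContinuousLinearMap.proj j : (Fin n → ℝ) →L[ℝ] ℝ)) z := by
    intro j _
    exact (hasDerivAt_phi (z j)).comp_hasFDerivAt z
      ((ContinuousLinearMap.proj j : (Fin n → ℝ) →L[ℝ] ℝ)).hasFDerivAt
  exact HasFDerivAt.finset_prod h

lemma fderiv_Phi_single (n : ℕ) (z : Fin n → ℝ) (i : Fin n) :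
    fderiv ℝ (Phi n) z (Pi.single i 1) = -(z i) * Phi n z := by
  rw [(hasFDerivAt_Phi n z).fderiv]
  simp only [ContinuousLinearMap.coe_sum', Finset.sum_apply, ContinuousLinearMap.coe_smul',
    Pi.smul_apply, ContinuousLinearMap.proj_apply, smul_eq_mul]
  rw [Finset.sum_eq_single i]
  · simp only [Pi.single_eq_same, mul_one, Phi]
    rw [← Finset.mul_prod_erase Finset.univ (fun k => phi (z k)) (Finset.mem_univ i)]
    ring
  · intro b _ hb
    simp [Pi.single_eq_of_ne hb]
  · simp

lemma gaussianReal_eq_withDensity :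
    gaussianReal 0 1 = volume.withDensity (fun x => ENNReal.ofReal (phi x)) := by
  rw [gaussianReal_of_var_ne_zero 0 one_ne_zero]
  rfl

lemma pi_gaussian_eq (n : ℕ) :
    (Measure.pi fun _ : Fin n => gaussianReal 0 1) =
      volume.withDensity (fun z => ENNReal.ofReal (Phi n z)) := by
  refine Measure.pi_eq fun s hs => ?_
  rw [withDensity_apply _ (MeasurableSet.univ_pi hs)]
  have key : ∀ z : Fin n → ℝ, (Set.pi Set.univ s).indicator
      (fun z => ENNReal.ofReal (Phi n z)) z
      = ENNReal.ofReal (∏ j, (s j).indicator phi (z j)) := by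
    intro z
    by_cases hz : z ∈ Set.pi Set.univ s
    · rw [Set.indicator_of_mem hz]
      congr 1
      refine Finset.prod_congr rfl fun j _ => ?_
      rw [Set.indicator_of_mem (hz j (Set.mem_univ j))]
    · rw [Set.indicator_of_notMem hz]
      rw [Set.mem_univ_pi] at hz
      push_neg at hz
      obtain ⟨j, hj⟩ := hz
      symm
      rw [ENNReal.ofReal_eq_zero]
      rw [← Finset.prod_erase_mul Finset.univ _ (Finset.mem_univ j),
        Set.indicator_of_notMem hj, mul_zero]
  rw [← lintegral_indicator (MeasurableSet.univ_pi hs)]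
  simp_rw [key]
  have hint : Integrable (fun z : Fin n → ℝ => ∏ j, (s j).indicator phi (z j)) := by
    apply Integrable.fintype_prod (f := fun (j : Fin n) => (s j).indicator phi)
    intro j
    exact integrable_phi.indicator (hs j)
  rw [← ofReal_integral_eq_lintegral_ofReal hint]
  · rw [integral_fintype_prod_volume_eq_prod (f := fun (j : Fin n) => (s j).indicator phi)]
    rw [ENNReal.ofReal_prod_of_nonneg]
    · refine Finset.prod_congr rfl fun j _ => ?_
      rw [gaussianReal_apply 0 one_ne_zero (s j), ← lintegral_indicator (hs j)]
      have hpt : ∀ x : ℝ, (s j).indicator (gaussianPDF 0 1) x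
          = ENNReal.ofReal ((s j).indicator phi x) := by
        intro x
        by_cases h : x ∈ s j <;> simp [h, gaussianPDF, phi]
      simp_rw [hpt]
      rw [← ofReal_integral_eq_lintegral_ofReal (integrable_phi.indicator (hs j))
        (Filter.Eventually.of_forall fun x =>
          Set.indicator_nonneg (fun y _ => phi_nonneg y) x)]
    · intro j _
      exact integral_nonneg fun x => Set.indicator_nonneg (fun y _ => phi_nonneg y) x
  · exact Filter.Eventually.of_forall fun z =>
      Finset.prod_nonneg fun j _ => Set.indicator_nonneg (fun y _ => phi_nonneg y) _

lemma integral_pi_gaussian (n : ℕ) (h : (Fin n → ℝ) → ℝ) :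
    (∫ z, h z ∂(Measure.pi fun _ : Fin n => gaussianReal 0 1)) =
      ∫ z, Phi n z * h z := by
  rw [pi_gaussian_eq n]
  have hm : Measurable fun z : Fin n → ℝ => (Phi n z).toNNReal :=
    ((contDiff_Phi n).continuous.measurable).real_toNNReal
  have : (fun z : Fin n → ℝ => ENNReal.ofReal (Phi n z))
      = fun z => ((Phi n z).toNNReal : ℝ≥0∞) := rfl
  rw [this, integral_withDensity_eq_integral_smul hm]
  refine integral_congr_ae (Filter.Eventually.of_forall fun z => ?_)
  simp [NNReal.smul_def, Real.coe_toNNReal _ (Phi_nonneg n z)]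

lemma stein (n : ℕ) (g : (Fin n → ℝ) → ℝ) (hg : ContDiff ℝ (⊤ : ℕ∞) g)
    (hgs : HasCompactSupport g) (i : Fin n) :
    (∫ z, z i * g z ∂(Measure.pi fun _ : Fin n => gaussianReal 0 1)) =
      ∫ z, fderiv ℝ g z (Pi.single i 1) ∂(Measure.pi fun _ : Fin n => gaussianReal 0 1) := by
  rw [integral_pi_gaussian, integral_pi_gaussian]
  have hPhid : Differentiable ℝ (Phi n) := (contDiff_Phi n).differentiable (by simp)
  have hgd : Differentiable ℝ g := hg.differentiable (by simp)
  have hgc : Continuous g := hg.continuous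
  have hPc : Continuous (Phi n) := (contDiff_Phi n).continuous
  have hfderivg : Continuous fun z => fderiv ℝ g z (Pi.single i 1) :=
    ((hg.fderiv_right (m := (⊤ : ℕ∞)) le_rfl).continuous).clm_apply continuous_const
  have h1 : Integrable (fun z : Fin n → ℝ =>
      fderiv ℝ (Phi n) z (Pi.single i 1) * g z) := by
    apply Continuous.integrable_of_hasCompactSupport
    · exact (((contDiff_Phi n).fderiv_right (m := (⊤ : ℕ∞)) le_rfl).continuous.clm_apply
        continuous_const).mul hgc
    · exact hgs.mul_left
  have h2 : Integrable (fun z : Fin n → ℝ =>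
      Phi n z * fderiv ℝ g z (Pi.single i 1)) := by
    apply Continuous.integrable_of_hasCompactSupport
    · exact hPc.mul hfderivg
    · apply HasCompactSupport.mul_left
      apply HasCompactSupport.comp_left (g := fun L : (Fin n → ℝ) →L[ℝ] ℝ => L (Pi.single i 1))
        (hgs.fderiv ℝ)
      simp
  have h3 : Integrable (fun z : Fin n → ℝ => Phi n z * g z) := by
    apply Continuous.integrable_of_hasCompactSupport
    · exact hPc.mul hgc
    · exact hgs.mul_left
  have key := integral_mul_fderiv_eq_neg_fderiv_mul_of_integrable h1 h2 h3 (fun x _ => hPhid x) (fun x _ => hgd x)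
    (v := Pi.single i 1)
  rw [key]
  rw [← integral_neg]
  refine integral_congr_ae (Filter.Eventually.of_forall fun z => ?_)
  show Phi n z * (z i * g z) = -(fderiv ℝ (Phi n) z (Pi.single i 1) * g z)
  rw [fderiv_Phi_single]
  ring

section Nice
variable {n : ℕ}

def Nice (g : (Fin n → ℝ) → ℝ) : Prop := ContDiff ℝ (⊤ : ℕ∞) g ∧ HasCompactSupport g

lemma Nice.integrable {g : (Fin n → ℝ) → ℝ} (h : Nice g) :
    Integrable g (Measure.pi fun _ : Fin n => gaussianReal 0 1) :=
  h.1.continuous.integrable_of_hasCompactSupport h.2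

lemma Nice.smul_mul {a g : (Fin n → ℝ) → ℝ} (ha : ContDiff ℝ (⊤ : ℕ∞) a) (h : Nice g) :
    Nice (fun z => a z * g z) :=
  ⟨ha.mul h.1, h.2.mul_left⟩

lemma Nice.mul_smul {a g : (Fin n → ℝ) → ℝ} (ha : ContDiff ℝ (⊤ : ℕ∞) a) (h : Nice g) :
    Nice (fun z => g z * a z) :=
  ⟨h.1.mul ha, h.2.mul_right⟩

lemma Nice.pd {g : (Fin n → ℝ) → ℝ} (h : Nice g) (i : Fin n) :
    Nice (fun z => fderiv ℝ g z (Pi.single i 1)) := by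
  constructor
  · exact ((h.1.fderiv_right (m := (⊤ : ℕ∞)) le_rfl)).clm_apply contDiff_const
  · apply HasCompactSupport.comp_left (g := fun L : (Fin n → ℝ) →L[ℝ] ℝ => L (Pi.single i 1))
      (h.2.fderiv ℝ)
    simp

lemma Nice.coord_mul {g : (Fin n → ℝ) → ℝ} (h : Nice g) (i : Fin n) :
    Nice (fun z => z i * g z) :=
  h.smul_mul ((ContinuousLinearMap.proj i : (Fin n → ℝ) →L[ℝ] ℝ)).contDiff

lemma Nice.add {a b : (Fin n → ℝ) → ℝ} (ha : Nice a) (hb : Nice b) :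
    Nice (fun z => a z + b z) :=
  ⟨ha.1.add hb.1, ha.2.add hb.2⟩

lemma Nice.sub {a b : (Fin n → ℝ) → ℝ} (ha : Nice a) (hb : Nice b) :
    Nice (fun z => a z - b z) := by
  refine ⟨ha.1.sub hb.1, ?_⟩
  have : (fun z => a z - b z) = (fun z => a z + (-b) z) := by ext z; simp [sub_eq_add_neg]
  rw [this]
  exact ha.2.add (HasCompactSupport.neg hb.2)

lemma Nice.zero : Nice (fun _ : Fin n → ℝ => (0:ℝ)) :=
  ⟨contDiff_const, by
    have : (fun _ : Fin n → ℝ => (0:ℝ)) = 0 := rfl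
    rw [this]
    exact HasCompactSupport.zero⟩

lemma Nice.sum {ι : Type*} (s : Finset ι) {a : ι → (Fin n → ℝ) → ℝ}
    (ha : ∀ i ∈ s, Nice (a i)) : Nice (fun z => ∑ i ∈ s, a i z) := by
  classical
  induction s using Finset.induction with
  | empty => simpa using Nice.zero
  | @insert x s' hx ih =>
    simp only [Finset.sum_insert hx]
    exact (ha x (Finset.mem_insert_self x s')).add
      (ih fun i hi => ha i (Finset.mem_insert_of_mem hi))

end Nice

section PD
variable {n : ℕ}

noncomputable def pd (i : Fin n) (g : (Fin n → ℝ) → ℝ) (z : Fin n → ℝ) : ℝ :=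
  fderiv ℝ g z (Pi.single i 1)

lemma pd_mul {a b : (Fin n → ℝ) → ℝ} (ha : Differentiable ℝ a) (hb : Differentiable ℝ b)
    (i : Fin n) (z : Fin n → ℝ) :
    pd i (fun z => a z * b z) z = pd i a z * b z + a z * pd i b z := by
  unfold pd
  rw [fderiv_fun_mul (ha z) (hb z)]
  simp only [ContinuousLinearMap.add_apply, ContinuousLinearMap.smul_apply, smul_eq_mul]
  ring

lemma pd_coord (i j : Fin n) (z : Fin n → ℝ) :
    pd i (fun z : Fin n → ℝ => z j) z = if j = i then 1 else 0 := by
  unfold pd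
  have : (fun z : Fin n → ℝ => z j)
      = (ContinuousLinearMap.proj j : (Fin n → ℝ) →L[ℝ] ℝ) := rfl
  rw [this, ContinuousLinearMap.fderiv]
  simp [Pi.single_apply]

lemma pd_coord_mul {b : (Fin n → ℝ) → ℝ} (hb : Differentiable ℝ b) (i j : Fin n)
    (z : Fin n → ℝ) :
    pd i (fun z => z j * b z) z = (if j = i then 1 else 0) * b z + z j * pd i b z := by
  rw [pd_mul (fun z => ?_) hb i z, pd_coord]
  exact ((ContinuousLinearMap.proj j : (Fin n → ℝ) →L[ℝ] ℝ)).differentiableAt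

lemma pd_sub {a b : (Fin n → ℝ) → ℝ} (ha : Differentiable ℝ a) (hb : Differentiable ℝ b)
    (i : Fin n) (z : Fin n → ℝ) :
    pd i (fun z => a z - b z) z = pd i a z - pd i b z := by
  unfold pd
  rw [fderiv_fun_sub (ha z) (hb z)]
  simp

lemma pd_sum {ι : Type*} (s : Finset ι) {a : ι → (Fin n → ℝ) → ℝ}
    (ha : ∀ j ∈ s, Differentiable ℝ (a j)) (i : Fin n) (z : Fin n → ℝ) :
    pd i (fun z => ∑ j ∈ s, a j z) z = ∑ j ∈ s, pd i (a j) z := by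
  unfold pd
  rw [fderiv_fun_sum fun j hj => (ha j hj) z]
  simp

lemma pd_comm {g : (Fin n → ℝ) → ℝ} (hg : ContDiff ℝ (⊤ : ℕ∞) g) (i j : Fin n) (z : Fin n → ℝ) :
    pd i (pd j g) z = pd j (pd i g) z := by
  unfold pd
  have hg' : ContDiff ℝ (⊤ : ℕ∞) (fderiv ℝ g) := hg.fderiv_right (m := (⊤ : ℕ∞)) le_rfl
  have hd : ∀ y, HasFDerivAt g (fderiv ℝ g y) y :=
    fun y => (hg.differentiable (by simp) y).hasFDerivAt
  have hd2 : HasFDerivAt (fderiv ℝ g) (fderiv ℝ (fderiv ℝ g) z) z :=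
    (hg'.differentiable (by simp) z).hasFDerivAt
  have hsymm := second_derivative_symmetric hd hd2 (Pi.single i 1) (Pi.single j 1)
  have key : ∀ v w : Fin n → ℝ,
      fderiv ℝ (fun y => fderiv ℝ g y w) z v = fderiv ℝ (fderiv ℝ g) z v w := by
    intro v w
    rw [fderiv_clm_apply (hg'.differentiable (by simp) z) (differentiableAt_const w)]
    simp
  rw [key, key, hsymm]

end PD

theorem aux_stein (n : ℕ) (F : Fin n → (Fin n → ℝ) → ℝ) (hF : ∀ i, Nice (F i)) :
    (∫ z, ((∑ i, z i * F i z) - ∑ i, pd i (F i) z) ^ 2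
        ∂(Measure.pi fun _ : Fin n => gaussianReal 0 1)) =
      ∫ z, ((∑ i, (F i z) ^ 2) + ∑ i, ∑ j, pd j (F i) z * pd i (F j) z)
        ∂(Measure.pi fun _ : Fin n => gaussianReal 0 1) := by
  set μ := Measure.pi fun _ : Fin n => gaussianReal 0 1 with hμ
  set T := fun z : Fin n → ℝ => (∑ i, z i * F i z) - ∑ i, pd i (F i) z with hTdef
  have nA : Nice (fun z : Fin n → ℝ => ∑ i, z i * F i z) :=
    Nice.sum Finset.univ (fun i _ => (hF i).coord_mul i)
  have nB : Nice (fun z : Fin n → ℝ => ∑ i, pd i (F i) z) :=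
    Nice.sum Finset.univ (a := fun i => pd i (F i)) (fun i _ => (hF i).pd i)
  have nT : Nice T := nA.sub nB
  have dF : ∀ i, Differentiable ℝ (F i) := fun i => (hF i).1.differentiable (by simp)
  have dT : Differentiable ℝ T := nT.1.differentiable (by simp)
  have npdF : ∀ i j, Nice (pd i (F j)) := fun i j => (hF j).pd i
  have dpdF : ∀ i j, Differentiable ℝ (pd i (F j)) := fun i j =>
    (npdF i j).1.differentiable (by simp)
  have steinP : ∀ (g : (Fin n → ℝ) → ℝ), Nice g → ∀ i : Fin n,
      (∫ z, z i * g z ∂μ) = ∫ z, pd i g z ∂μ := fun g hg i => stein n g hg.1 hg.2 i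
  -- pointwise derivative of T
  have pdT : ∀ (i : Fin n) (z : Fin n → ℝ), pd i T z =
      F i z + (∑ j, z j * pd i (F j) z) - ∑ j, pd i (pd j (F j)) z := by
    intro i z
    have h1 : pd i T z = pd i (fun z : Fin n → ℝ => ∑ i, z i * F i z) z -
        pd i (fun z : Fin n → ℝ => ∑ i, pd i (F i) z) z :=
      pd_sub (nA.1.differentiable (by simp)) (nB.1.differentiable (by simp)) i z
    have h2 : pd i (fun z : Fin n → ℝ => ∑ j, z j * F j z) z
        = ∑ j, pd i (fun z => z j * F j z) z :=
      pd_sum Finset.univ (a := fun j => fun z : Fin n → ℝ => z j * F j z)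
        (fun j _ => ((hF j).coord_mul j).1.differentiable (by simp)) i z
    have h3 : pd i (fun z : Fin n → ℝ => ∑ j, pd j (F j) z) z
        = ∑ j, pd i (pd j (F j)) z :=
      pd_sum Finset.univ (a := fun j => pd j (F j))
        (fun j _ => dpdF j j) i z
    rw [h1, h2, h3]
    have h4 : ∀ j : Fin n, pd i (fun z => z j * F j z) z
        = (if j = i then 1 else 0) * F j z + z j * pd i (F j) z :=
      fun j => pd_coord_mul (dF j) i j z
    simp only [h4]
    rw [Finset.sum_add_distrib]
    congr 2
    simp [ite_mul]
  -- niceness of various products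
  have nFT : ∀ i, Nice (fun z => F i z * T z) := fun i => Nice.smul_mul (hF i).1 nT
  have nzFT : ∀ i, Nice (fun z => z i * (F i z * T z)) := fun i => (nFT i).coord_mul i
  have npdFT : ∀ i, Nice (fun z => pd i (F i) z * T z) := fun i =>
    Nice.smul_mul (npdF i i).1 nT
  have nFpdT : ∀ i, Nice (fun z => F i z * pd i T z) := fun i =>
    Nice.smul_mul (hF i).1 (nT.pd i)
  have nFpdF : ∀ i j, Nice (fun z => F i z * pd i (F j) z) := fun i j =>
    Nice.smul_mul (hF i).1 (npdF i j)
  have nzFpdF : ∀ i j, Nice (fun z => z j * (F i z * pd i (F j) z)) := fun i j =>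
    (nFpdF i j).coord_mul j
  have npdFpdF : ∀ i j, Nice (fun z => pd j (F i) z * pd i (F j) z) := fun i j =>
    Nice.smul_mul (npdF j i).1 (npdF i j)
  have nFpdpdF : ∀ i j, Nice (fun z => F i z * pd i (pd j (F j)) z) := fun i j =>
    Nice.smul_mul (hF i).1 ((npdF j j).pd i)
  have nFpdipdjF : ∀ i j, Nice (fun z => F i z * pd j (pd i (F j)) z) := fun i j =>
    Nice.smul_mul (hF i).1 ((npdF i j).pd j)
  have nFF : ∀ i, Nice (fun z => F i z * F i z) := fun i => Nice.smul_mul (hF i).1 (hF i)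
  calc (∫ z, T z ^ 2 ∂μ)
      = (∫ z, (∑ i, z i * (F i z * T z)) ∂μ) - ∫ z, (∑ i, pd i (F i) z * T z) ∂μ := by
        rw [← integral_sub (Nice.sum Finset.univ fun i _ => nzFT i).integrable
          (Nice.sum Finset.univ fun i _ => npdFT i).integrable]
        refine integral_congr_ae (Filter.Eventually.of_forall fun z => ?_)
        show T z ^ 2 = _
        rw [sq]
        nth_rewrite 1 [hTdef]
        show ((∑ i, z i * F i z) - ∑ i, pd i (F i) z) * T z = _
        rw [sub_mul, Finset.sum_mul, Finset.sum_mul]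
        simp only [mul_assoc]
    _ = (∑ i, ∫ z, z i * (F i z * T z) ∂μ) - ∑ i, ∫ z, pd i (F i) z * T z ∂μ := by
        rw [integral_finset_sum Finset.univ fun i _ => (nzFT i).integrable,
          integral_finset_sum Finset.univ fun i _ => (npdFT i).integrable]
    _ = (∑ i, ∫ z, (pd i (F i) z * T z + F i z * pd i T z) ∂μ)
        - ∑ i, ∫ z, pd i (F i) z * T z ∂μ := by
        congr 1
        refine Finset.sum_congr rfl fun i _ => ?_
        rw [steinP _ (nFT i) i]
        refine integral_congr_ae (Filter.Eventually.of_forall fun z => ?_)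
        exact pd_mul (dF i) dT i z
    _ = ∑ i, ∫ z, F i z * pd i T z ∂μ := by
        rw [← Finset.sum_sub_distrib]
        refine Finset.sum_congr rfl fun i _ => ?_
        rw [integral_add (npdFT i).integrable (nFpdT i).integrable]
        ring
    _ = ∑ i, ((∫ z, F i z * F i z ∂μ) + (∑ j, ∫ z, z j * (F i z * pd i (F j) z) ∂μ)
          - ∑ j, ∫ z, F i z * pd i (pd j (F j)) z ∂μ) := by
        refine Finset.sum_congr rfl fun i _ => ?_
        have hpt : ∀ z : Fin n → ℝ, F i z * pd i T z =
            (F i z * F i z + ∑ j, z j * (F i z * pd i (F j) z))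
              - ∑ j, F i z * pd i (pd j (F j)) z := by
          intro z
          rw [pdT i z]
          rw [mul_sub, mul_add, Finset.mul_sum, Finset.mul_sum]
          congr 1
          congr 1
          refine Finset.sum_congr rfl fun j _ => ?_
          ring
        simp only [hpt]
        rw [integral_sub (((nFF i).add (Nice.sum Finset.univ fun j _ => nzFpdF i j))).integrable
          (Nice.sum Finset.univ (a := fun j => fun z => F i z * pd i (pd j (F j)) z)
            fun j _ => nFpdpdF i j).integrable,
          integral_add (nFF i).integrable
            (Nice.sum Finset.univ fun j _ => nzFpdF i j).integrable,
          integral_finset_sum Finset.univ fun j _ => (nzFpdF i j).integrable,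
          integral_finset_sum Finset.univ
            (f := fun j => fun z => F i z * pd i (pd j (F j)) z)
            fun j _ => (nFpdpdF i j).integrable]
    _ = ∑ i, ((∫ z, F i z * F i z ∂μ)
          + (∑ j, ((∫ z, pd j (F i) z * pd i (F j) z ∂μ)
              + ∫ z, F i z * pd i (pd j (F j)) z ∂μ))
          - ∑ j, ∫ z, F i z * pd i (pd j (F j)) z ∂μ) := by
        refine Finset.sum_congr rfl fun i _ => ?_
        congr 2
        refine Finset.sum_congr rfl fun j _ => ?_
        rw [steinP _ (nFpdF i j) j]
        rw [← integral_add (npdFpdF i j).integrable (nFpdpdF i j).integrable]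
        refine integral_congr_ae (Filter.Eventually.of_forall fun z => ?_)
        show pd j (fun z => F i z * pd i (F j) z) z = _
        rw [pd_mul (dF i) (dpdF i j) j z]
        rw [pd_comm (hF j).1 j i z]
    _ = ∑ i, ((∫ z, F i z * F i z ∂μ) + ∑ j, ∫ z, pd j (F i) z * pd i (F j) z ∂μ) := by
        refine Finset.sum_congr rfl fun i _ => ?_
        rw [Finset.sum_add_distrib]
        ring
    _ = ∫ z, ((∑ i, (F i z) ^ 2) + ∑ i, ∑ j, pd j (F i) z * pd i (F j) z) ∂μ := by
        rw [integral_add (Nice.sum Finset.univ (a := fun i => fun z => (F i z)^2)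
            (fun i _ => by
              have := nFF i
              simpa [sq] using this)).integrable
          (Nice.sum Finset.univ (a := fun i => fun z => ∑ j, pd j (F i) z * pd i (F j) z)
            fun i _ => Nice.sum Finset.univ
              (a := fun j => fun z => pd j (F i) z * pd i (F j) z)
              fun j _ => npdFpdF i j).integrable]
        rw [integral_finset_sum Finset.univ (f := fun i => fun z => (F i z)^2)
          (fun i _ => by
            have := (nFF i).integrable
            simpa [sq] using this),
          integral_finset_sum Finset.univ
            (f := fun i => fun z => ∑ j, pd j (F i) z * pd i (F j) z)
            fun i _ => (Nice.sum Finset.univ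
              (a := fun j => fun z => pd j (F i) z * pd i (F j) z)
              fun j _ => npdFpdF i j).integrable]
        rw [Finset.sum_add_distrib]
        congr 1
        · refine Finset.sum_congr rfl fun i _ => ?_
          refine integral_congr_ae (Filter.Eventually.of_forall fun z => ?_)
          simp [sq]
        · refine Finset.sum_congr rfl fun i _ => ?_
          rw [integral_finset_sum Finset.univ
            (f := fun j => fun z => pd j (F i) z * pd i (F j) z)
            fun j _ => (npdFpdF i j).integrable]

end SteinAux


/-- Second Order Stein formula for smooth compactly supported vector fields:
for `z ~ N(0, I_n)` and `f : ℝⁿ → ℝⁿ` infinitely differentiable with compact support,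
`E[(zᵀ f(z) - div f(z))²] = E[‖f(z)‖² + tr((∇f(z))²)]`. -/
theorem second_order_stein (n : ℕ) (f : (Fin n → ℝ) → (Fin n → ℝ))
    (hf : ContDiff ℝ (⊤ : ℕ∞) f) (hsupp : HasCompactSupport f) :
    (∫ z, ((∑ i, z i * f z i) -
          ∑ i, fderiv ℝ (fun y => f y i) z (Pi.single i 1)) ^ 2
        ∂(Measure.pi fun _ : Fin n => gaussianReal 0 1)) =
      ∫ z, ((∑ i, (f z i) ^ 2) +
          ∑ i, ∑ j, fderiv ℝ (fun y => f y i) z (Pi.single j 1) *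
            fderiv ℝ (fun y => f y j) z (Pi.single i 1))
        ∂(Measure.pi fun _ : Fin n => gaussianReal 0 1) := by
  have hFnice : ∀ i, Nice (fun y : Fin n → ℝ => f y i) := by
    intro i
    constructor
    · exact ((ContinuousLinearMap.proj i : (Fin n → ℝ) →L[ℝ] ℝ)).contDiff.comp hf
    · exact hsupp.comp_left (g := fun v : Fin n → ℝ => v i) rfl
  exact aux_stein n (fun i y => f y i) hFnice
end

section
/- Let z ~ N(0, I_n) and let f, h : ℝⁿ → ℝⁿ be infinitely differentiable with compact support. Then E[(zᵀ f(z) - div f(z))(zᵀ h(z) - div h(z))] = E[f(z)ᵀ h(z) + tr(∇f(z) ∇h(z))]. -/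
open MeasureTheory ProbabilityTheory

open Real
open scoped ENNReal NNReal


-- integral over ℝ of derivative of compactly supported C¹ function is 0
lemma my_integral_deriv_eq_zero (F : ℝ → ℝ) (hF : ContDiff ℝ 1 F)
    (hFs : HasCompactSupport F) : ∫ x, deriv F x = 0 := by
  have h1 := hFs.integral_Iic_deriv_eq hF 0
  have h2 := hFs.integral_Ioi_deriv_eq hF 0
  have hi : Integrable (deriv F) :=
    (hF.continuous_deriv le_rfl).integrable_of_hasCompactSupport hFs.deriv
  rw [← intervalIntegral.integral_Iic_add_Ioi (b := 0) hi.integrableOn hi.integrableOn, h1, h2]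
  ring

-- gaussianPDFReal 0 1 smoothness & derivative
lemma gpdf_eq (x : ℝ) : gaussianPDFReal 0 1 x = (Real.sqrt (2 * π))⁻¹ * Real.exp (- x ^ 2 / 2) := by
  simp [gaussianPDFReal]

lemma gpdf_contDiff : ContDiff ℝ (⊤ : ℕ∞) (gaussianPDFReal 0 1) := by
  have : gaussianPDFReal 0 1 = fun x => (Real.sqrt (2 * π))⁻¹ * Real.exp (- x ^ 2 / 2) :=
    funext gpdf_eq
  rw [this]
  apply ContDiff.mul contDiff_const
  exact (ContDiff.div_const (contDiff_id.pow 2).neg 2).exp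

lemma gpdf_hasDeriv (x : ℝ) :
    HasDerivAt (gaussianPDFReal 0 1) (-x * gaussianPDFReal 0 1 x) x := by
  have hfun : gaussianPDFReal 0 1 = fun x => (Real.sqrt (2 * π))⁻¹ * Real.exp (- x ^ 2 / 2) :=
    funext gpdf_eq
  rw [hfun]
  have h1 : HasDerivAt (fun x : ℝ => - x ^ 2 / 2) (-x) x := by
    have := ((hasDerivAt_pow 2 x).neg).div_const 2
    refine this.congr_deriv ?_; norm_num; ring
  have := (h1.exp).const_mul (Real.sqrt (2 * π))⁻¹
  refine this.congr_deriv ?_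
  ring

lemma integral_gaussian_eq (g : ℝ → ℝ) :
    ∫ x, g x ∂(gaussianReal 0 1) = ∫ x, gaussianPDFReal 0 1 x * g x := by
  rw [gaussianReal_of_var_ne_zero 0 one_ne_zero]
  have hmeas : Measurable fun x => (gaussianPDFReal 0 1 x).toNNReal :=
    (measurable_gaussianPDFReal 0 1).real_toNNReal
  have hd : gaussianPDF 0 1 = fun x => ((gaussianPDFReal 0 1 x).toNNReal : ℝ≥0∞) := rfl
  rw [hd, integral_withDensity_eq_integral_smul hmeas g]
  refine integral_congr_ae (Filter.Eventually.of_forall fun x => ?_)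
  simp [NNReal.smul_def, Real.coe_toNNReal _ (gaussianPDFReal_nonneg 0 1 x)]

lemma stein1 (φ : ℝ → ℝ) (hφ : ContDiff ℝ 1 φ) (hφs : HasCompactSupport φ) :
    ∫ x, x * φ x ∂(gaussianReal 0 1) = ∫ x, deriv φ x ∂(gaussianReal 0 1) := by
  rw [integral_gaussian_eq, integral_gaussian_eq]
  set p := gaussianPDFReal 0 1 with hp
  have hpc : Continuous p := gpdf_contDiff.continuous
  set F := fun x => φ x * p x with hFdef
  have hFs : HasCompactSupport F := hφs.mul_right
  have hF : ContDiff ℝ 1 F := hφ.mul (gpdf_contDiff.of_le (by simp))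
  have hder : ∀ x, deriv F x = p x * deriv φ x - p x * (x * φ x) := by
    intro x
    have h1 : HasDerivAt φ (deriv φ x) x :=
      ((hφ.differentiable one_ne_zero) x).hasDerivAt
    have h2 := h1.mul (gpdf_hasDeriv x)
    rw [show deriv F x = deriv φ x * p x + φ x * (-x * p x) from h2.deriv]; ring
  have h0 : ∫ x, (p x * deriv φ x - p x * (x * φ x)) = 0 := by
    rw [← my_integral_deriv_eq_zero F hF hFs]
    exact integral_congr_ae (Filter.Eventually.of_forall fun x => (hder x).symm)
  have hI2 : Integrable (fun x => p x * deriv φ x) :=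
    (hpc.mul (hφ.continuous_deriv le_rfl)).integrable_of_hasCompactSupport hφs.deriv.mul_left
  have hI1 : Integrable (fun x => p x * (x * φ x)) :=
    (hpc.mul (continuous_id.mul hφ.continuous)).integrable_of_hasCompactSupport
      hφs.mul_left.mul_left
  rw [integral_sub hI2 hI1] at h0
  linarith

section SteinPi

variable {n : ℕ}

lemma contDiff_fderiv_apply {g : (Fin n → ℝ) → ℝ} (hg : ContDiff ℝ (⊤ : ℕ∞) g)
    (v : Fin n → ℝ) : ContDiff ℝ (⊤ : ℕ∞) (fun z => fderiv ℝ g z v) :=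
  (hg.fderiv_right (by simp)).clm_apply contDiff_const

noncomputable abbrev gpi (n : ℕ) : Measure (Fin n → ℝ) :=
  Measure.pi fun _ : Fin n => gaussianReal 0 1

lemma stein_pi (i : Fin n) (g : (Fin n → ℝ) → ℝ)
    (hg : ContDiff ℝ (⊤ : ℕ∞) g) (hgs : HasCompactSupport g) :
    ∫ z, z i * g z ∂(gpi n) = ∫ z, fderiv ℝ g z (Pi.single i 1) ∂(gpi n) := by
  obtain ⟨m, rfl⟩ : ∃ m, n = m + 1 := ⟨n - 1, by have := i.pos; omega⟩
  set μ1 := gaussianReal 0 1 with hμ1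
  set μ' := gpi m with hμ'
  set e := MeasurableEquiv.piFinSuccAbove (fun _ : Fin (m + 1) => ℝ) i with he
  have hMP : MeasurePreserving e (gpi (m + 1)) (μ1.prod μ') :=
    measurePreserving_piFinSuccAbove (fun _ => gaussianReal 0 1) i
  have hMPs : MeasurePreserving e.symm (μ1.prod μ') (gpi (m + 1)) := hMP.symm e
  have hesymm : ∀ p : ℝ × (Fin m → ℝ), e.symm p = i.insertNth p.1 p.2 := fun p => rfl
  -- continuity of the insertion map
  have hins : Continuous (fun p : ℝ × (Fin m → ℝ) => i.insertNth (α := fun _ => ℝ) p.1 p.2) :=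
    Continuous.finInsertNth (A := fun _ => ℝ) i continuous_fst continuous_snd
  have hecont : Continuous (e : (Fin (m+1) → ℝ) → ℝ × (Fin m → ℝ)) := by
    have : (e : (Fin (m+1) → ℝ) → ℝ × (Fin m → ℝ))
        = fun z => (z i, fun j => z (i.succAbove j)) := rfl
    rw [this]
    exact (continuous_apply i).prodMk (continuous_pi fun j => continuous_apply _)
  set K : Set (ℝ × (Fin m → ℝ)) := e '' tsupport g with hK
  have hKc : IsCompact K := hgs.image hecont
  have hmemK : ∀ p : ℝ × (Fin m → ℝ), e.symm p ∈ tsupport g → p ∈ K := by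
    intro p hp
    exact ⟨e.symm p, hp, e.apply_symm_apply p⟩
  -- the two integrands on the product space
  set F1 : ℝ × (Fin m → ℝ) → ℝ := fun p => p.1 * g (e.symm p) with hF1
  set F2 : ℝ × (Fin m → ℝ) → ℝ := fun p => fderiv ℝ g (e.symm p) (Pi.single i 1) with hF2
  have hsymmc : Continuous (fun p : ℝ × (Fin m → ℝ) => e.symm p) := hins
  have hF1c : Continuous F1 := continuous_fst.mul (hg.continuous.comp hsymmc)
  have hF2c : Continuous F2 :=
    (contDiff_fderiv_apply hg _).continuous.comp hsymmc
  have hF1s : HasCompactSupport F1 := by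
    apply HasCompactSupport.intro hKc
    intro p hp
    have : g (e.symm p) = 0 := by
      by_contra hne
      exact hp (hmemK p (subset_tsupport g hne))
    simp [hF1, this]
  have hF2s : HasCompactSupport F2 := by
    apply HasCompactSupport.intro hKc
    intro p hp
    have : e.symm p ∉ tsupport g := fun hmem => hp (hmemK _ hmem)
    have hz : fderiv ℝ g (e.symm p) = 0 := by
      by_contra hne
      exact this (support_fderiv_subset ℝ hne)
    simp [hF2, hz]
  have hI1 : Integrable F1 (μ1.prod μ') := hF1c.integrable_of_hasCompactSupport hF1s
  have hI2 : Integrable F2 (μ1.prod μ') := hF2c.integrable_of_hasCompactSupport hF2s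
  -- transfer integrals to the product space
  have t1 : ∫ z, z i * g z ∂(gpi (m + 1)) = ∫ p, F1 p ∂(μ1.prod μ') := by
    rw [← hMPs.integral_comp e.symm.measurableEmbedding (fun z => z i * g z)]
    refine integral_congr_ae (Filter.Eventually.of_forall fun p => ?_)
    simp [hF1, hesymm]
  have t2 : ∫ z, fderiv ℝ g z (Pi.single i 1) ∂(gpi (m + 1)) = ∫ p, F2 p ∂(μ1.prod μ') := by
    rw [← hMPs.integral_comp e.symm.measurableEmbedding (fun z => fderiv ℝ g z (Pi.single i 1))]
  rw [t1, t2, integral_prod_symm F1 hI1, integral_prod_symm F2 hI2]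
  -- now reduce to the 1D Stein lemma for each fixed w
  refine integral_congr_ae (Filter.Eventually.of_forall fun w => ?_)
  set φ : ℝ → ℝ := fun x => g (i.insertNth (α := fun _ => ℝ) x w) with hφ
  -- the insertion map as an affine map in x
  have haff : ∀ x : ℝ, HasDerivAt (fun x : ℝ => i.insertNth (α := fun _ => ℝ) x w) (Pi.single i 1) x := by
    intro x
    have heq : (fun x : ℝ => i.insertNth (α := fun _ => ℝ) x w)
        = fun x => i.insertNth (α := fun _ => ℝ) 0 w + x • Pi.single i 1 := by
      funext x; ext j
      refine Fin.succAboveCases i ?_ ?_ j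
      · simp
      · intro j
        simp [Fin.insertNth_apply_succAbove, Pi.single_eq_of_ne (Fin.succAbove_ne i j)]
    rw [heq]
    simpa using ((hasDerivAt_id x).smul_const (Pi.single i (1:ℝ))).const_add (i.insertNth (α := fun _ => ℝ) 0 w)
  have hφd : ∀ x : ℝ, HasDerivAt φ (fderiv ℝ g (i.insertNth (α := fun _ => ℝ) x w) (Pi.single i 1)) x := by
    intro x
    exact ((hg.differentiable (by simp) (i.insertNth (α := fun _ => ℝ) x w)).hasFDerivAt).comp_hasDerivAt x (haff x)
  have hφC : ContDiff ℝ 1 φ := by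
    apply (hg.of_le (by simp)).comp
    have heq : (fun x : ℝ => i.insertNth (α := fun _ => ℝ) x w)
        = fun x => i.insertNth (α := fun _ => ℝ) 0 w + x • Pi.single i 1 := by
      funext x; ext j
      refine Fin.succAboveCases i ?_ ?_ j
      · simp
      · intro j
        simp [Fin.insertNth_apply_succAbove, Pi.single_eq_of_ne (Fin.succAbove_ne i j)]
    rw [heq]
    exact contDiff_const.add (contDiff_id.smul contDiff_const)
  have hφs : HasCompactSupport φ := by
    obtain ⟨R, hR⟩ := hgs.isBounded.subset_closedBall 0
    apply HasCompactSupport.intro (isCompact_Icc (a := -R) (b := R))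
    intro x hx
    simp only [Set.mem_Icc, not_and_or, not_le] at hx
    have hnorm : R < ‖i.insertNth (α := fun _ => ℝ) x w‖ := by
      have h1 : |x| ≤ ‖i.insertNth (α := fun _ => ℝ) x w‖ := by
        have := norm_le_pi_norm (i.insertNth (α := fun _ => ℝ) x w) i
        simpa [Fin.insertNth_apply_same] using this
      rcases hx with hx | hx
      · calc R < -x := by linarith
          _ ≤ |x| := by rw [abs_eq_max_neg]; exact le_max_right _ _
          _ ≤ _ := h1
      · calc R < x := hx
          _ ≤ |x| := le_abs_self x
          _ ≤ _ := h1
    have : i.insertNth (α := fun _ => ℝ) x w ∉ tsupport g := by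
      intro hmem
      have := hR hmem
      rw [Metric.mem_closedBall, dist_zero_right] at this
      linarith
    exact image_eq_zero_of_notMem_tsupport (f := g) this
  have hstein := stein1 φ hφC hφs
  calc ∫ x, F1 (x, w) ∂μ1 = ∫ x, x * φ x ∂μ1 := by
        refine integral_congr_ae (Filter.Eventually.of_forall fun x => ?_)
        simp [hF1, hesymm, hφ]
    _ = ∫ x, deriv φ x ∂μ1 := hstein
    _ = ∫ x, F2 (x, w) ∂μ1 := by
        refine integral_congr_ae (Filter.Eventually.of_forall fun x => ?_)
        rw [(hφd x).deriv]
        simp [hF2, hesymm]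

end SteinPi

section Helpers

variable {n : ℕ}

lemma nice_integrable {g : (Fin n → ℝ) → ℝ} (hg : Continuous g)
    (hgs : HasCompactSupport g) : Integrable g (gpi n) :=
  hg.integrable_of_hasCompactSupport hgs

lemma coord_contDiff (i : Fin n) : ContDiff ℝ (⊤ : ℕ∞) (fun z : Fin n → ℝ => z i) :=
  contDiff_pi.mp contDiff_id i

lemma fderiv_coord (j : Fin n) (z : Fin n → ℝ) :
    fderiv ℝ (fun y : Fin n → ℝ => y j) z
      = ContinuousLinearMap.proj (R := ℝ) (φ := fun _ : Fin n => ℝ) j :=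
  (ContinuousLinearMap.proj (R := ℝ) (φ := fun _ : Fin n => ℝ) j).fderiv

lemma fderiv_vanish {g : (Fin n → ℝ) → ℝ} {z : Fin n → ℝ}
    (hz : z ∉ tsupport g) (v : Fin n → ℝ) : fderiv ℝ g z v = 0 := by
  have : fderiv ℝ g z = 0 := by
    by_contra hne
    exact hz (support_fderiv_subset ℝ hne)
  simp [this]

lemma clairaut {u : (Fin n → ℝ) → ℝ} (hu : ContDiff ℝ (⊤ : ℕ∞) u) (z v w : Fin n → ℝ) :
    fderiv ℝ (fun y => fderiv ℝ u y v) z w = fderiv ℝ (fun y => fderiv ℝ u y w) z v := by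
  have hg : DifferentiableAt ℝ (fderiv ℝ u) z :=
    ((hu.fderiv_right (m := 1) (by exact WithTop.coe_le_coe.mpr le_top)).differentiable one_ne_zero) z
  have h1 : ∀ v w : Fin n → ℝ,
      fderiv ℝ (fun y => fderiv ℝ u y v) z w = fderiv ℝ (fderiv ℝ u) z w v := by
    intro v w
    have hcomp := ((ContinuousLinearMap.apply ℝ ℝ v).hasFDerivAt.comp z hg.hasFDerivAt).fderiv
    have : fderiv ℝ (fun y => fderiv ℝ u y v) z
        = (ContinuousLinearMap.apply ℝ ℝ v).comp (fderiv ℝ (fderiv ℝ u) z) := hcomp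
    rw [this]
    rfl
  rw [h1, h1]
  exact (hu.contDiffAt.isSymmSndFDerivAt (by rw [minSmoothness_of_isRCLikeNormedField]; exact WithTop.coe_le_coe.mpr le_top)) w v

lemma stein_mul (i : Fin n) (u v : (Fin n → ℝ) → ℝ)
    (hu : ContDiff ℝ (⊤ : ℕ∞) u) (hv : ContDiff ℝ (⊤ : ℕ∞) v) (hvs : HasCompactSupport v) :
    ∫ z, z i * (u z * v z) ∂gpi n
      = ∫ z, (fderiv ℝ u z (Pi.single i 1) * v z
          + u z * fderiv ℝ v z (Pi.single i 1)) ∂gpi n := by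
  rw [stein_pi i (fun z => u z * v z) (hu.mul hv) hvs.mul_left]
  refine integral_congr_ae (Filter.Eventually.of_forall fun z => ?_)
  show (fderiv ℝ (fun z => u z * v z) z) (Pi.single i 1) = _
  rw [fderiv_fun_mul (hu.differentiable (by simp) z) (hv.differentiable (by simp) z)]
  simp only [ContinuousLinearMap.add_apply, ContinuousLinearMap.smul_apply, smul_eq_mul]
  ring

end Helpers

section Key

variable {n : ℕ}

lemma T_contDiff (F : Fin n → (Fin n → ℝ) → ℝ) (hF : ∀ j, ContDiff ℝ (⊤ : ℕ∞) (F j)) :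
    ContDiff ℝ (⊤ : ℕ∞) (fun y => (∑ j, y j * F j y)
      - ∑ j, fderiv ℝ (F j) y (Pi.single j 1)) := by
  apply ContDiff.sub
  · exact ContDiff.sum fun j _ => (coord_contDiff j).mul (hF j)
  · exact ContDiff.sum fun j _ => contDiff_fderiv_apply (hF j) _

lemma T_supp (F : Fin n → (Fin n → ℝ) → ℝ) (hFs : ∀ j, HasCompactSupport (F j)) :
    HasCompactSupport (fun y => (∑ j, y j * F j y)
      - ∑ j, fderiv ℝ (F j) y (Pi.single j 1)) := by
  apply HasCompactSupport.intro (K := ⋃ j, tsupport (F j))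
      (isCompact_iUnion fun j => hFs j)
  intro z hz
  simp only [Set.mem_iUnion, not_exists] at hz
  have h1 : ∀ j, F j z = 0 := fun j => image_eq_zero_of_notMem_tsupport (hz j)
  have h2 : ∀ j, fderiv ℝ (F j) z (Pi.single j 1) = 0 :=
    fun j => fderiv_vanish (hz j) _
  simp [h1, h2]

lemma fderiv_T (F : Fin n → (Fin n → ℝ) → ℝ) (hF : ∀ j, ContDiff ℝ (⊤ : ℕ∞) (F j))
    (i : Fin n) (z : Fin n → ℝ) :
    fderiv ℝ (fun y => (∑ j, y j * F j y)
        - ∑ j, fderiv ℝ (F j) y (Pi.single j 1)) z (Pi.single i 1)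
      = F i z + ((∑ j, z j * fderiv ℝ (F j) z (Pi.single i 1))
          - ∑ j, fderiv ℝ (fun y => fderiv ℝ (F j) y (Pi.single j 1)) z (Pi.single i 1)) := by
  have hA : ∀ j : Fin n, DifferentiableAt ℝ (fun y : Fin n → ℝ => y j * F j y) z :=
    fun j => ((coord_contDiff j).mul (hF j)).differentiable (by simp) z
  have hB : ∀ j : Fin n, DifferentiableAt ℝ
      (fun y => fderiv ℝ (F j) y (Pi.single j 1)) z :=
    fun j => (contDiff_fderiv_apply (hF j) _).differentiable (by simp) z
  have hAsum : DifferentiableAt ℝ (fun y : Fin n → ℝ => ∑ j, y j * F j y) z := by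
    exact DifferentiableAt.fun_sum fun j _ => hA j
  have hBsum : DifferentiableAt ℝ
      (fun y => ∑ j, fderiv ℝ (F j) y (Pi.single j 1)) z := by
    exact DifferentiableAt.fun_sum fun j _ => hB j
  rw [fderiv_fun_sub hAsum hBsum, ContinuousLinearMap.sub_apply,
    fderiv_fun_sum (fun j _ => hA j), fderiv_fun_sum (fun j _ => hB j),
    ContinuousLinearMap.sum_apply, ContinuousLinearMap.sum_apply]
  have hj : ∀ j : Fin n, (fderiv ℝ (fun y : Fin n → ℝ => y j * F j y) z) (Pi.single i 1)
      = z j * fderiv ℝ (F j) z (Pi.single i 1) + F j z * (Pi.single i 1 : Fin n → ℝ) j := by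
    intro j
    rw [fderiv_fun_mul ((coord_contDiff j).differentiable (by simp) z)
      ((hF j).differentiable (by simp) z)]
    simp only [ContinuousLinearMap.add_apply, ContinuousLinearMap.smul_apply, smul_eq_mul,
      fderiv_coord, ContinuousLinearMap.proj_apply]
  rw [Finset.sum_congr rfl fun j _ => hj j, Finset.sum_add_distrib]
  have : (∑ j, F j z * (Pi.single i 1 : Fin n → ℝ) j) = F i z := by
    simp [Pi.single_apply, Finset.sum_ite_eq']
  rw [this]
  ring

end Key

section KeyMain

variable {n : ℕ}

lemma nice_int_mul {u v : (Fin n → ℝ) → ℝ} (hu : Continuous u) (hv : Continuous v)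
    (hvs : HasCompactSupport v) : Integrable (fun z => u z * v z) (gpi n) :=
  nice_integrable (hu.mul hv) hvs.mul_left

lemma nice_int_coord_mul (i : Fin n) {u : (Fin n → ℝ) → ℝ} (hu : Continuous u)
    (hus : HasCompactSupport u) : Integrable (fun z => z i * u z) (gpi n) :=
  nice_integrable ((continuous_apply i).mul hu) hus.mul_left

theorem key_stein (F H : Fin n → (Fin n → ℝ) → ℝ)
    (hF : ∀ j, ContDiff ℝ (⊤ : ℕ∞) (F j)) (hFs : ∀ j, HasCompactSupport (F j))
    (hH : ∀ j, ContDiff ℝ (⊤ : ℕ∞) (H j)) (hHs : ∀ j, HasCompactSupport (H j)) :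
    (∫ z, ((∑ j, z j * F j z) - ∑ j, fderiv ℝ (F j) z (Pi.single j 1)) *
          ((∑ j, z j * H j z) - ∑ j, fderiv ℝ (H j) z (Pi.single j 1)) ∂gpi n)
      = ∫ z, ((∑ i, F i z * H i z) + ∑ i, ∑ j,
          fderiv ℝ (F i) z (Pi.single j 1) * fderiv ℝ (H j) z (Pi.single i 1)) ∂gpi n := by
  -- abbreviations
  set DF : Fin n → Fin n → (Fin n → ℝ) → ℝ :=
    fun a b z => fderiv ℝ (F a) z (Pi.single b 1) with hDFdef
  set DH : Fin n → Fin n → (Fin n → ℝ) → ℝ :=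
    fun a b z => fderiv ℝ (H a) z (Pi.single b 1) with hDHdef
  set TF : (Fin n → ℝ) → ℝ :=
    fun y => (∑ j, y j * F j y) - ∑ j, fderiv ℝ (F j) y (Pi.single j 1) with hTFdef
  set TH : (Fin n → ℝ) → ℝ :=
    fun y => (∑ j, y j * H j y) - ∑ j, fderiv ℝ (H j) y (Pi.single j 1) with hTHdef
  -- basic regularity facts
  have hTFc : ContDiff ℝ (⊤ : ℕ∞) TF := T_contDiff F hF
  have hTHc : ContDiff ℝ (⊤ : ℕ∞) TH := T_contDiff H hH
  have hTFs : HasCompactSupport TF := T_supp F hFs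
  have hTHs : HasCompactSupport TH := T_supp H hHs
  have hDFc : ∀ a b, ContDiff ℝ (⊤ : ℕ∞) (DF a b) := fun a b => contDiff_fderiv_apply (hF a) _
  have hDHc : ∀ a b, ContDiff ℝ (⊤ : ℕ∞) (DH a b) := fun a b => contDiff_fderiv_apply (hH a) _
  have hDFs : ∀ a b, HasCompactSupport (DF a b) := fun a b => (hFs a).fderiv_apply ℝ _
  have hDHs : ∀ a b, HasCompactSupport (DH a b) := fun a b => (hHs a).fderiv_apply ℝ _
  have hDDFc : ∀ a b c, ContDiff ℝ (⊤ : ℕ∞) (fun z => fderiv ℝ (DF a b) z (Pi.single c 1)) :=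
    fun a b c => contDiff_fderiv_apply (hDFc a b) _
  have hDDFs : ∀ a b c, HasCompactSupport (fun z => fderiv ℝ (DF a b) z (Pi.single c 1)) :=
    fun a b c => (hDFs a b).fderiv_apply ℝ _
  -- Step 1: expand the product over the h-part
  have step1 : ∫ z, TF z * TH z ∂gpi n
      = ∑ i, ∫ z, (z i * (TF z * H i z) - TF z * DH i i z) ∂gpi n := by
    rw [show (fun z => TF z * TH z)
        = fun z => ∑ i, (z i * (TF z * H i z) - TF z * DH i i z) from funext fun z => by
      rw [hTHdef]
      simp only [mul_sub, Finset.mul_sum, ← Finset.sum_sub_distrib]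
      exact Finset.sum_congr rfl fun i _ => by rw [hDHdef]; ring]
    exact integral_finset_sum _ fun i _ =>
      (nice_int_coord_mul i (hTFc.continuous.mul (hH i).continuous) (hHs i).mul_left).sub
        (nice_int_mul hTFc.continuous (hDHc i i).continuous (hDHs i i))
  set DD : Fin n → Fin n → Fin n → (Fin n → ℝ) → ℝ :=
    fun a b c z => fderiv ℝ (DF a b) z (Pi.single c 1) with hDDdef
  have hDDc : ∀ a b c, ContDiff ℝ (⊤ : ℕ∞) (DD a b c) := fun a b c => hDDFc a b c
  have hDDs : ∀ a b c, HasCompactSupport (DD a b c) := fun a b c => hDDFs a b c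
  -- Step 2: Stein in coordinate i applied to TF * H i
  have step2 : ∀ i, ∫ z, (z i * (TF z * H i z) - TF z * DH i i z) ∂gpi n
      = ∫ z, fderiv ℝ TF z (Pi.single i 1) * H i z ∂gpi n := by
    intro i
    have hint1 : Integrable (fun z => fderiv ℝ TF z (Pi.single i 1) * H i z) (gpi n) :=
      nice_int_mul (contDiff_fderiv_apply hTFc _).continuous (hH i).continuous (hHs i)
    have hint2 : Integrable (fun z => TF z * DH i i z) (gpi n) :=
      nice_int_mul hTFc.continuous (hDHc i i).continuous (hDHs i i)
    have hint3 : Integrable (fun z => z i * (TF z * H i z)) (gpi n) :=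
      nice_int_coord_mul i (hTFc.continuous.mul (hH i).continuous) (hHs i).mul_left
    have hs' : ∫ z, z i * (TF z * H i z) ∂gpi n
        = ∫ z, (fderiv ℝ TF z (Pi.single i 1) * H i z + TF z * DH i i z) ∂gpi n :=
      stein_mul i TF (H i) hTFc (hH i) (hHs i)
    rw [integral_sub hint3 hint2, hs', integral_add hint1 hint2]
    ring
  -- Step 3: expand the derivative of TF
  have step3 : ∀ i, ∫ z, fderiv ℝ TF z (Pi.single i 1) * H i z ∂gpi n
      = ∫ z, F i z * H i z ∂gpi n
        + ((∑ j, ∫ z, z j * (DF j i z * H i z) ∂gpi n)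
          - ∑ j, ∫ z, DD j j i z * H i z ∂gpi n) := by
    intro i
    have hpt : (fun z => fderiv ℝ TF z (Pi.single i 1) * H i z)
        = fun z => F i z * H i z + ((∑ j, z j * (DF j i z * H i z))
            - ∑ j, DD j j i z * H i z) := by
      funext z
      have h' : fderiv ℝ TF z (Pi.single i 1)
          = F i z + ((∑ j, z j * DF j i z) - ∑ j, DD j j i z) := fderiv_T F hF i z
      rw [h', add_mul, sub_mul, Finset.sum_mul, Finset.sum_mul]
      congr 1
      congr 1
      exact Finset.sum_congr rfl fun j _ => by ring
    have intA : Integrable (fun z => F i z * H i z) (gpi n) :=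
      nice_int_mul (hF i).continuous (hH i).continuous (hHs i)
    have intBj : ∀ j, Integrable (fun z => z j * (DF j i z * H i z)) (gpi n) :=
      fun j => nice_int_coord_mul j ((hDFc j i).continuous.mul (hH i).continuous)
        (hHs i).mul_left
    have intB : Integrable (fun z => ∑ j, z j * (DF j i z * H i z)) (gpi n) :=
      integrable_finset_sum _ fun j _ => intBj j
    have intCj : ∀ j, Integrable (fun z => DD j j i z * H i z) (gpi n) :=
      fun j => nice_int_mul (hDDc j j i).continuous (hH i).continuous (hHs i)
    have intC : Integrable (fun z => ∑ j, DD j j i z * H i z) (gpi n) :=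
      integrable_finset_sum _ fun j _ => intCj j
    have intBC : Integrable (fun z => (∑ j, z j * (DF j i z * H i z))
        - ∑ j, DD j j i z * H i z) (gpi n) := intB.sub intC
    rw [hpt, integral_add intA intBC]
    rw [integral_sub intB intC,
      integral_finset_sum _ (fun j _ => intBj j), integral_finset_sum _ (fun j _ => intCj j)]
  -- Step 4: Stein in coordinate j applied to DF j i * H i
  have step4 : ∀ i j, ∫ z, z j * (DF j i z * H i z) ∂gpi n
      = ∫ z, DD j i j z * H i z ∂gpi n + ∫ z, DF j i z * DH i j z ∂gpi n := by
    intro i j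
    have hint1 : Integrable (fun z => DD j i j z * H i z) (gpi n) :=
      nice_int_mul (hDDc j i j).continuous (hH i).continuous (hHs i)
    have hint2 : Integrable (fun z => DF j i z * DH i j z) (gpi n) :=
      nice_int_mul (hDFc j i).continuous (hDHc i j).continuous (hDHs i j)
    have hs' : ∫ z, z j * (DF j i z * H i z) ∂gpi n
        = ∫ z, (DD j i j z * H i z + DF j i z * DH i j z) ∂gpi n :=
      stein_mul j (DF j i) (H i) (hDFc j i) (hH i) (hHs i)
    rw [hs', integral_add hint1 hint2]
  -- Step 5: symmetry of second derivatives
  have step5 : ∀ i j, ∫ z, DD j i j z * H i z ∂gpi n = ∫ z, DD j j i z * H i z ∂gpi n := by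
    intro i j
    refine integral_congr_ae (Filter.Eventually.of_forall fun z => ?_)
    show DD j i j z * H i z = DD j j i z * H i z
    have : DD j i j z = DD j j i z :=
      clairaut (hF j) z (Pi.single i 1) (Pi.single j 1)
    rw [this]
  -- assemble
  have main : ∫ z, TF z * TH z ∂gpi n
      = ∑ i, (∫ z, F i z * H i z ∂gpi n + ∑ j, ∫ z, DF j i z * DH i j z ∂gpi n) := by
    rw [step1]
    refine Finset.sum_congr rfl fun i _ => ?_
    rw [step2 i, step3 i]
    have : (∑ j, ∫ z, z j * (DF j i z * H i z) ∂gpi n)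
        = (∑ j, ∫ z, DD j j i z * H i z ∂gpi n)
          + ∑ j, ∫ z, DF j i z * DH i j z ∂gpi n := by
      rw [← Finset.sum_add_distrib]
      exact Finset.sum_congr rfl fun j _ => by rw [step4 i j, step5 i j]
    rw [this]
    ring
  -- identify with the stated right-hand side
  have intA : ∀ i, Integrable (fun z => F i z * H i z) (gpi n) :=
    fun i => nice_int_mul (hF i).continuous (hH i).continuous (hHs i)
  have intD : ∀ i j, Integrable (fun z => DF i j z * DH j i z) (gpi n) :=
    fun i j => nice_int_mul (hDFc i j).continuous (hDHc j i).continuous (hDHs j i)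
  have rhs : ∫ z, ((∑ i, F i z * H i z) + ∑ i, ∑ j, DF i j z * DH j i z) ∂gpi n
      = (∑ i, ∫ z, F i z * H i z ∂gpi n) + ∑ i, ∑ j, ∫ z, DF i j z * DH j i z ∂gpi n := by
    rw [integral_add (integrable_finset_sum _ fun i _ => intA i)
      (integrable_finset_sum _ fun i _ => integrable_finset_sum _ fun j _ => intD i j),
      integral_finset_sum _ (fun i _ => intA i),
      integral_finset_sum _ (fun i _ => integrable_finset_sum _ fun j _ => intD i j)]
    congr 1
    exact Finset.sum_congr rfl fun i _ =>
      integral_finset_sum _ (fun j _ => intD i j)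
  calc ∫ z, TF z * TH z ∂gpi n
      = ∑ i, (∫ z, F i z * H i z ∂gpi n + ∑ j, ∫ z, DF j i z * DH i j z ∂gpi n) := main
    _ = (∑ i, ∫ z, F i z * H i z ∂gpi n) + ∑ i, ∑ j, ∫ z, DF j i z * DH i j z ∂gpi n := by
        rw [Finset.sum_add_distrib]
    _ = (∑ i, ∫ z, F i z * H i z ∂gpi n) + ∑ i, ∑ j, ∫ z, DF i j z * DH j i z ∂gpi n := by
        congr 1
        exact Finset.sum_comm
    _ = ∫ z, ((∑ i, F i z * H i z) + ∑ i, ∑ j, DF i j z * DH j i z) ∂gpi n := rhs.symm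

end KeyMain


set_option maxHeartbeats 2000000 in
/-- Inner-product (polarization) form of the Second Order Stein formula:
for `z ~ N(0, I_n)` and `f, h : ℝⁿ → ℝⁿ` smooth with compact support,
`E[(zᵀf(z) - div f(z))(zᵀh(z) - div h(z))] = E[f(z)ᵀh(z) + tr(∇f(z) ∇h(z))]`. -/
theorem second_order_stein_polarization (n : ℕ)
    (f h : (Fin n → ℝ) → (Fin n → ℝ))
    (hf : ContDiff ℝ (⊤ : ℕ∞) f) (hfsupp : HasCompactSupport f)
    (hh : ContDiff ℝ (⊤ : ℕ∞) h) (hhsupp : HasCompactSupport h) :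
    (∫ z, ((∑ i, z i * f z i) -
            ∑ i, fderiv ℝ (fun y => f y i) z (Pi.single i 1)) *
          ((∑ i, z i * h z i) -
            ∑ i, fderiv ℝ (fun y => h y i) z (Pi.single i 1))
        ∂(Measure.pi fun _ : Fin n => gaussianReal 0 1)) =
      ∫ z, ((∑ i, f z i * h z i) +
          ∑ i, ∑ j, fderiv ℝ (fun y => f y i) z (Pi.single j 1) *
            fderiv ℝ (fun y => h y j) z (Pi.single i 1))
        ∂(Measure.pi fun _ : Fin n => gaussianReal 0 1) := by
  exact key_stein (fun i y => f y i) (fun i y => h y i)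
    (fun i => contDiff_pi.mp hf i)
    (fun i => hfsupp.comp_left (g := fun v : Fin n → ℝ => v i) rfl)
    (fun i => contDiff_pi.mp hh i)
    (fun i => hhsupp.comp_left (g := fun v : Fin n → ℝ => v i) rfl)
end

section
/- Let ψ : ℝⁿ → ℝ be twice continuously differentiable with exp(-ψ) a probability density, let z have density exp(-ψ(z)), and let f : ℝⁿ → ℝⁿ be smooth with compact support. Then E[(∇ψ(z)ᵀ f(z) - div f(z))²] = E[f(z)ᵀ (∇²ψ(z)) f(z) + tr((∇f(z))²)], where ∇²ψ is the Hessian of ψ. -/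
open MeasureTheory ProbabilityTheory

section SteinAuxiliary
open Metric Set


variable {n : ℕ}

lemma lipschitz_of_c1_cs {u : (Fin n → ℝ) → ℝ} (hu : ContDiff ℝ 1 u)
    (hus : HasCompactSupport u) : ∃ C : NNReal, LipschitzWith C u := by
  have hcont : Continuous (fderiv ℝ u) := hu.continuous_fderiv one_ne_zero
  have hcs : HasCompactSupport (fderiv ℝ u) := hus.fderiv ℝ
  obtain ⟨C, hC⟩ := hcs.exists_bound_of_continuous hcont
  refine ⟨C.toNNReal, lipschitzWith_of_nnnorm_fderiv_le (hu.differentiable one_ne_zero)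
    fun x => ?_⟩
  simpa [← norm_toNNReal] using Real.toNNReal_mono (hC x)

lemma ibp_core {u v : (Fin n → ℝ) → ℝ} (hu : ContDiff ℝ 1 u) (hv : ContDiff ℝ 1 v)
    (hvs : HasCompactSupport v) (w : Fin n → ℝ) :
    ∫ x, fderiv ℝ u x w * v x = -∫ x, u x * fderiv ℝ v x w := by
  obtain ⟨R₀, hR₀⟩ := hvs.isBounded.subset_ball (0 : Fin n → ℝ)
  set R : ℝ := max R₀ 1 with hRdef
  have hRpos : 0 < R := lt_of_lt_of_le one_pos (le_max_right _ _)
  have hKR : tsupport v ⊆ ball 0 R := hR₀.trans (ball_subset_ball (le_max_left _ _))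
  set φ : ContDiffBump (0 : Fin n → ℝ) := ⟨R, R + 1, hRpos, by linarith⟩ with hφdef
  have hχ1 : ∀ x ∈ ball (0 : Fin n → ℝ) R, φ x = 1 := fun x hx =>
    φ.one_of_mem_closedBall (ball_subset_closedBall hx)
  set u' : (Fin n → ℝ) → ℝ := fun x => φ x * u x with hu'def
  have hu'c : ContDiff ℝ 1 u' := (φ.contDiff).mul hu
  have hu's : HasCompactSupport u' := φ.hasCompactSupport.mul_right
  -- local agreement on the ball
  have heq : ∀ x ∈ ball (0 : Fin n → ℝ) R, u' x = u x := fun x hx => by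
    simp [hu'def, hχ1 x hx]
  have hfd : ∀ x ∈ ball (0 : Fin n → ℝ) R, fderiv ℝ u' x = fderiv ℝ u x := fun x hx => by
    apply Filter.EventuallyEq.fderiv_eq
    filter_upwards [isOpen_ball.mem_nhds hx] with y hy using heq y hy
  obtain ⟨C, hCl⟩ := lipschitz_of_c1_cs hu'c hu's
  obtain ⟨D, hDl⟩ := lipschitz_of_c1_cs hv hvs
  have key := hCl.integral_lineDeriv_mul_eq hDl hvs w (μ := volume)
  have hudiff : Differentiable ℝ u' := hu'c.differentiable one_ne_zero
  have hvdiff : Differentiable ℝ v := hv.differentiable one_ne_zero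
  have lhs_eq : ∀ x, lineDeriv ℝ u' x w * v x = fderiv ℝ u x w * v x := by
    intro x
    rw [(hudiff x).lineDeriv_eq_fderiv]
    by_cases hx : x ∈ ball (0 : Fin n → ℝ) R
    · rw [hfd x hx]
    · have hvx : v x = 0 := by
        have : x ∉ tsupport v := fun h => hx (hKR h)
        exact image_eq_zero_of_notMem_tsupport this
      simp [hvx]
  have rhs_eq : ∀ x, lineDeriv ℝ v x (-w) * u' x = -(u x * fderiv ℝ v x w) := by
    intro x
    rw [(hvdiff x).lineDeriv_eq_fderiv, map_neg]
    by_cases hx : x ∈ ball (0 : Fin n → ℝ) R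
    · rw [heq x hx]; ring
    · have hvx : fderiv ℝ v x = 0 := by
        apply fderiv_of_notMem_tsupport
        exact fun h => hx (hKR h)
      simp [hvx]
  calc ∫ x, fderiv ℝ u x w * v x = ∫ x, lineDeriv ℝ u' x w * v x := by
        simp_rw [lhs_eq]
    _ = ∫ x, lineDeriv ℝ v x (-w) * u' x := key
    _ = ∫ x, -(u x * fderiv ℝ v x w) := by simp_rw [rhs_eq]
    _ = -∫ x, u x * fderiv ℝ v x w := integral_neg _

lemma fderiv_fderiv_apply {g : (Fin n → ℝ) → ℝ} (hg : ContDiff ℝ 2 g) (x v w : Fin n → ℝ) :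
    fderiv ℝ (fun y => fderiv ℝ g y v) x w = fderiv ℝ (fderiv ℝ g) x w v := by
  have hd : Differentiable ℝ (fderiv ℝ g) :=
    (hg.fderiv_right (m := 1) (by norm_num)).differentiable one_ne_zero
  rw [fderiv_clm_apply (hd x) (differentiableAt_const v)]
  simp

lemma schwarz_aux {g : (Fin n → ℝ) → ℝ} (hg : ContDiff ℝ 2 g) (x v w : Fin n → ℝ) :
    fderiv ℝ (fun y => fderiv ℝ g y v) x w = fderiv ℝ (fun y => fderiv ℝ g y w) x v := by
  rw [fderiv_fderiv_apply hg, fderiv_fderiv_apply hg]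
  exact hg.contDiffAt.isSymmSndFDerivAt (by norm_num) w v


noncomputable section SteinAux

variable {n : ℕ}

def Wfn (ψ : (Fin n → ℝ) → ℝ) : (Fin n → ℝ) → ℝ := fun x => Real.exp (-ψ x)

def Fin' (f : (Fin n → ℝ) → (Fin n → ℝ)) (i : Fin n) : (Fin n → ℝ) → ℝ := fun x => f x i

def DPsi (ψ : (Fin n → ℝ) → ℝ) (j : Fin n) : (Fin n → ℝ) → ℝ :=
  fun x => fderiv ℝ ψ x (Pi.single j 1)

def DFn (f : (Fin n → ℝ) → (Fin n → ℝ)) (i j : Fin n) : (Fin n → ℝ) → ℝ :=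
  fun x => fderiv ℝ (fun y => f y i) x (Pi.single j 1)

def TTn (ψ : (Fin n → ℝ) → ℝ) (f : (Fin n → ℝ) → (Fin n → ℝ)) : (Fin n → ℝ) → ℝ :=
  fun x => (∑ i, DPsi ψ i x * Fin' f i x) - ∑ i, DFn f i i x

end SteinAux

variable {n : ℕ}

lemma cont_fderiv_apply {g : (Fin n → ℝ) → ℝ} (hg : ContDiff ℝ 1 g) (v : Fin n → ℝ) :
    Continuous fun x => fderiv ℝ g x v :=
  ((hg.fderiv_right (m := 0) (by norm_num)).clm_apply contDiff_const).continuous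

lemma main_core (ψ : (Fin n → ℝ) → ℝ) (hψ : ContDiff ℝ 2 ψ)
    (f : (Fin n → ℝ) → (Fin n → ℝ)) (hf : ContDiff ℝ 3 f) (hfsupp : HasCompactSupport f) :
    (∫ x, Wfn ψ x * (TTn ψ f x) ^ 2) =
      ∫ x, Wfn ψ x * ((∑ i, ∑ j, Fin' f i x * fderiv ℝ (DPsi ψ j) x (Pi.single i 1) * Fin' f j x)
        + ∑ i, ∑ j, DFn f i j x * DFn f j i x) := by
  have integ : ∀ {g : (Fin n → ℝ) → ℝ}, Continuous g → HasCompactSupport g →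
      Integrable g volume := fun hc hcs => hc.integrable_of_hasCompactSupport hcs
  have csmul : ∀ (a b : (Fin n → ℝ) → ℝ), HasCompactSupport b →
      HasCompactSupport (fun x => a x * b x) := fun a b hb => hb.mul_left
  have csmul' : ∀ (a b : (Fin n → ℝ) → ℝ), HasCompactSupport a →
      HasCompactSupport (fun x => a x * b x) := fun a b ha => ha.mul_right
  have hψd : Differentiable ℝ ψ := hψ.differentiable two_ne_zero
  have hW : ContDiff ℝ 2 (Wfn ψ) := Real.contDiff_exp.comp hψ.neg
  have hWc : Continuous (Wfn ψ) := hW.continuous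
  have hW1 : ContDiff ℝ 1 (Wfn ψ) := hW.of_le one_le_two
  have hDPsi : ∀ j, ContDiff ℝ 1 (DPsi ψ j) := fun j =>
    (hψ.fderiv_right (m := 1) (by norm_num)).clm_apply contDiff_const
  have hDPsic : ∀ j, Continuous (DPsi ψ j) := fun j => (hDPsi j).continuous
  have hFi : ∀ i, ContDiff ℝ 3 (Fin' f i) := fun i =>
    (ContinuousLinearMap.proj (R := ℝ) (φ := fun _ : Fin n => ℝ) i).contDiff.comp hf
  have hFi1 : ∀ i, ContDiff ℝ 1 (Fin' f i) := fun i => (hFi i).of_le (by norm_num)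
  have hFic : ∀ i, Continuous (Fin' f i) := fun i => (hFi i).continuous
  have hFis : ∀ i, HasCompactSupport (Fin' f i) := fun i =>
    hfsupp.comp_left (g := fun v : Fin n → ℝ => v i) rfl
  have hDF : ∀ i j, ContDiff ℝ 2 (DFn f i j) := fun i j =>
    ((hFi i).fderiv_right (m := 2) (by norm_num)).clm_apply contDiff_const
  have hDFc : ∀ i j, Continuous (DFn f i j) := fun i j => (hDF i j).continuous
  have hDFs : ∀ i j, HasCompactSupport (DFn f i j) := fun i j =>
    (hFis i).fderiv_apply ℝ (Pi.single j 1)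
  have hTT : ContDiff ℝ 1 (TTn ψ f) := by
    apply ContDiff.sub
    · exact ContDiff.sum fun i _ => (hDPsi i).mul (hFi1 i)
    · exact ContDiff.sum fun i _ => ((hDF i i).of_le one_le_two)
  have hTTc : Continuous (TTn ψ f) := hTT.continuous
  have cHH : ∀ i j, Continuous fun x => fderiv ℝ (DPsi ψ j) x (Pi.single i 1) :=
    fun i j => cont_fderiv_apply (hDPsi j) _
  have cD2 : ∀ i j k, Continuous fun x => fderiv ℝ (DFn f i j) x (Pi.single k 1) :=
    fun i j k => cont_fderiv_apply ((hDF i j).of_le one_le_two) _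
  -- derivative of the weight
  have hWd : ∀ x v, fderiv ℝ (Wfn ψ) x v = -(fderiv ℝ ψ x v * Wfn ψ x) := by
    intro x v
    have h1 : HasFDerivAt (Wfn ψ) (Real.exp (-ψ x) • (-(fderiv ℝ ψ x))) x :=
      ((hψd x).hasFDerivAt.neg).exp
    rw [h1.fderiv]
    simp only [ContinuousLinearMap.coe_smul', Pi.smul_apply, ContinuousLinearMap.neg_apply,
      smul_eq_mul, Wfn]
    ring
  -- product rule applied to a vector
  have hmul : ∀ (a b : (Fin n → ℝ) → ℝ), Differentiable ℝ a → Differentiable ℝ b → ∀ x v,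
      fderiv ℝ (fun y => a y * b y) x v = fderiv ℝ a x v * b x + a x * fderiv ℝ b x v := by
    intro a b ha hb x v
    rw [fderiv_fun_mul (ha x) (hb x)]
    simp only [ContinuousLinearMap.add_apply, ContinuousLinearMap.coe_smul', Pi.smul_apply,
      smul_eq_mul]
    ring
  have hggd : ∀ (i : Fin n) x, fderiv ℝ (fun y => Fin' f i y * Wfn ψ y) x (Pi.single i 1)
      = DFn f i i x * Wfn ψ x - Fin' f i x * (DPsi ψ i x * Wfn ψ x) := by
    intro i x
    rw [hmul _ _ ((hFi1 i).differentiable one_ne_zero) (hW.differentiable two_ne_zero) x _,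
      hWd x (Pi.single i 1)]
    simp only [DFn, DPsi, show (Fin' f i) = fun y => f y i from rfl]
    ring
  -- Step A pointwise identity
  have key1 : ∀ x, Wfn ψ x * TTn ψ f x ^ 2
      = ∑ i, -(TTn ψ f x * fderiv ℝ (fun y => Fin' f i y * Wfn ψ y) x (Pi.single i 1)) := by
    intro x
    calc Wfn ψ x * TTn ψ f x ^ 2
        = (TTn ψ f x * Wfn ψ x) * ((∑ i, DPsi ψ i x * Fin' f i x) - ∑ i, DFn f i i x) := by
          simp only [TTn]; ring
      _ = ∑ i, (TTn ψ f x * Wfn ψ x) * (DPsi ψ i x * Fin' f i x - DFn f i i x) := by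
          rw [← Finset.sum_sub_distrib, Finset.mul_sum]
      _ = ∑ i, -(TTn ψ f x * fderiv ℝ (fun y => Fin' f i y * Wfn ψ y) x (Pi.single i 1)) := by
          refine Finset.sum_congr rfl fun i _ => ?_
          rw [hggd i x]; ring
  have hggc : ∀ i : Fin n, ContDiff ℝ 1 fun y => Fin' f i y * Wfn ψ y :=
    fun i => (hFi1 i).mul hW1
  have hggs : ∀ i : Fin n, HasCompactSupport fun y => Fin' f i y * Wfn ψ y :=
    fun i => (hFis i).mul_right
  have int1 : ∀ i : Fin n, Integrable (fun x =>
      -(TTn ψ f x * fderiv ℝ (fun y => Fin' f i y * Wfn ψ y) x (Pi.single i 1))) volume := by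
    intro i
    refine (integ (hTTc.mul (cont_fderiv_apply (hggc i) _)) ?_).neg
    exact csmul _ _ ((hggs i).fderiv_apply ℝ _)
  have stepA : (∫ x, Wfn ψ x * TTn ψ f x ^ 2)
      = ∑ i, ∫ x, fderiv ℝ (TTn ψ f) x (Pi.single i 1) * (Fin' f i x * Wfn ψ x) := by
    calc (∫ x, Wfn ψ x * TTn ψ f x ^ 2)
        = ∫ x, ∑ i, -(TTn ψ f x *
            fderiv ℝ (fun y => Fin' f i y * Wfn ψ y) x (Pi.single i 1)) := by simp_rw [key1]
      _ = ∑ i, ∫ x, -(TTn ψ f x *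
            fderiv ℝ (fun y => Fin' f i y * Wfn ψ y) x (Pi.single i 1)) :=
          integral_finset_sum _ fun i _ => int1 i
      _ = ∑ i, ∫ x, fderiv ℝ (TTn ψ f) x (Pi.single i 1) * (Fin' f i x * Wfn ψ x) := by
          refine Finset.sum_congr rfl fun i _ => ?_
          rw [integral_neg, ibp_core hTT (hggc i) (hggs i) (Pi.single i 1)]
  -- derivative of T
  have hTd : ∀ x (i : Fin n), fderiv ℝ (TTn ψ f) x (Pi.single i 1) =
      (∑ j, (fderiv ℝ (DPsi ψ j) x (Pi.single i 1) * Fin' f j x + DPsi ψ j x * DFn f j i x))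
        - ∑ j, fderiv ℝ (DFn f j j) x (Pi.single i 1) := by
    intro x i
    have h1 : ∀ j : Fin n, HasFDerivAt (fun y => DPsi ψ j y * Fin' f j y)
        (DPsi ψ j x • fderiv ℝ (Fin' f j) x + Fin' f j x • fderiv ℝ (DPsi ψ j) x) x :=
      fun j => (((hDPsi j).differentiable one_ne_zero) x).hasFDerivAt.mul
        (((hFi1 j).differentiable one_ne_zero) x).hasFDerivAt
    have h2 : HasFDerivAt (TTn ψ f)
        ((∑ j, (DPsi ψ j x • fderiv ℝ (Fin' f j) x + Fin' f j x • fderiv ℝ (DPsi ψ j) x))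
          - ∑ j, fderiv ℝ (DFn f j j) x) x := by
      exact (HasFDerivAt.fun_sum fun j _ => h1 j).sub
        (HasFDerivAt.fun_sum fun j _ =>
          ((((hDF j j).of_le one_le_two).differentiable one_ne_zero) x).hasFDerivAt)
    rw [h2.fderiv]
    simp only [ContinuousLinearMap.coe_sub', Pi.sub_apply, ContinuousLinearMap.coe_sum',
      Finset.sum_apply, ContinuousLinearMap.add_apply, ContinuousLinearMap.coe_smul',
      Pi.smul_apply, smul_eq_mul]
    congr 1
    refine Finset.sum_congr rfl fun j _ => ?_
    simp only [DFn, show (Fin' f j) = fun y => f y j from rfl]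
    ring
  -- integrability of the three families
  have intHH : ∀ i j : Fin n, Integrable (fun x =>
      Wfn ψ x * (Fin' f i x * fderiv ℝ (DPsi ψ j) x (Pi.single i 1) * Fin' f j x)) volume := by
    intro i j
    refine integ (hWc.mul (((hFic i).mul (cHH i j)).mul (hFic j))) ?_
    exact csmul _ _ (csmul _ _ (hFis j))
  have intMid : ∀ i j : Fin n, Integrable (fun x =>
      DPsi ψ j x * DFn f j i x * (Fin' f i x * Wfn ψ x)) volume := by
    intro i j
    refine integ (((hDPsic j).mul (hDFc j i)).mul ((hFic i).mul hWc)) ?_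
    exact csmul _ _ (csmul' _ _ (hFis i))
  have intD2 : ∀ i j : Fin n, Integrable (fun x =>
      Wfn ψ x * (fderiv ℝ (DFn f j j) x (Pi.single i 1) * Fin' f i x)) volume := by
    intro i j
    refine integ (hWc.mul ((cD2 j j i).mul (hFic i))) ?_
    exact csmul _ _ (csmul _ _ (hFis i))
  have intTr : ∀ i j : Fin n, Integrable (fun x =>
      Wfn ψ x * (DFn f j i x * DFn f i j x)) volume := by
    intro i j
    refine integ (hWc.mul ((hDFc j i).mul (hDFc i j))) ?_
    exact csmul _ _ (csmul' _ _ (hDFs j i))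
  have intPair : ∀ i j : Fin n, Integrable (fun x =>
      Wfn ψ x * (Fin' f i x * fderiv ℝ (DPsi ψ j) x (Pi.single i 1) * Fin' f j x)
        + DPsi ψ j x * DFn f j i x * (Fin' f i x * Wfn ψ x)) volume :=
    fun i j => (intHH i j).add (intMid i j)
  -- Step B : expand the derivative of T inside the integral
  have stepB : ∀ i : Fin n,
      (∫ x, fderiv ℝ (TTn ψ f) x (Pi.single i 1) * (Fin' f i x * Wfn ψ x))
      = ((∑ j, ∫ x, Wfn ψ x * (Fin' f i x * fderiv ℝ (DPsi ψ j) x (Pi.single i 1) * Fin' f j x))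
        + ∑ j, ∫ x, DPsi ψ j x * DFn f j i x * (Fin' f i x * Wfn ψ x))
        - ∑ j, ∫ x, Wfn ψ x * (fderiv ℝ (DFn f j j) x (Pi.single i 1) * Fin' f i x) := by
    intro i
    have e1 : ∀ x, fderiv ℝ (TTn ψ f) x (Pi.single i 1) * (Fin' f i x * Wfn ψ x)
        = (∑ j, (Wfn ψ x * (Fin' f i x * fderiv ℝ (DPsi ψ j) x (Pi.single i 1) * Fin' f j x)
             + DPsi ψ j x * DFn f j i x * (Fin' f i x * Wfn ψ x)))
          - ∑ j, Wfn ψ x * (fderiv ℝ (DFn f j j) x (Pi.single i 1) * Fin' f i x) := by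
      intro x
      rw [hTd x i, sub_mul, Finset.sum_mul, Finset.sum_mul]
      congr 1
      · exact Finset.sum_congr rfl fun j _ => by ring
      · exact Finset.sum_congr rfl fun j _ => by ring
    simp_rw [e1]
    rw [integral_sub (integrable_finset_sum _ fun j _ => intPair i j)
        (integrable_finset_sum _ fun j _ => intD2 i j),
      integral_finset_sum _ (fun j _ => intPair i j),
      integral_finset_sum _ (fun j _ => intD2 i j)]
    congr 1
    rw [← Finset.sum_add_distrib]
    exact Finset.sum_congr rfl fun j _ => integral_add (intHH i j) (intMid i j)
  -- Step C : integrate the middle term by parts, using Schwarz symmetry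
  have stepC : ∀ i j : Fin n,
      (∫ x, DPsi ψ j x * DFn f j i x * (Fin' f i x * Wfn ψ x))
      = (∫ x, Wfn ψ x * (fderiv ℝ (DFn f j j) x (Pi.single i 1) * Fin' f i x))
        + ∫ x, Wfn ψ x * (DFn f j i x * DFn f i j x) := by
    intro i j
    have e2 : ∀ x, DPsi ψ j x * DFn f j i x * (Fin' f i x * Wfn ψ x)
        = -(fderiv ℝ (Wfn ψ) x (Pi.single j 1) * (DFn f j i x * Fin' f i x)) := by
      intro x; rw [hWd]; simp only [DPsi]; ring
    have hv1 : ContDiff ℝ 1 fun y => DFn f j i y * Fin' f i y :=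
      ((hDF j i).of_le one_le_two).mul (hFi1 i)
    have hv1s : HasCompactSupport fun y => DFn f j i y * Fin' f i y := csmul' _ _ (hDFs j i)
    have hg2 : ContDiff ℝ 2 fun y => f y j := (hFi j).of_le (by norm_num)
    have hdv : ∀ x, fderiv ℝ (fun y => DFn f j i y * Fin' f i y) x (Pi.single j 1)
        = fderiv ℝ (DFn f j j) x (Pi.single i 1) * Fin' f i x + DFn f j i x * DFn f i j x := by
      intro x
      rw [hmul _ _ (((hDF j i).of_le one_le_two).differentiable one_ne_zero)
        ((hFi1 i).differentiable one_ne_zero) x _]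
      have h5 : fderiv ℝ (DFn f j i) x (Pi.single j 1)
          = fderiv ℝ (DFn f j j) x (Pi.single i 1) :=
        schwarz_aux hg2 x (Pi.single i 1) (Pi.single j 1)
      rw [h5]
      rfl
    calc (∫ x, DPsi ψ j x * DFn f j i x * (Fin' f i x * Wfn ψ x))
        = ∫ x, -(fderiv ℝ (Wfn ψ) x (Pi.single j 1) * (DFn f j i x * Fin' f i x)) := by
          simp_rw [e2]
      _ = -∫ x, fderiv ℝ (Wfn ψ) x (Pi.single j 1) * (DFn f j i x * Fin' f i x) :=
          integral_neg _
      _ = ∫ x, Wfn ψ x * fderiv ℝ (fun y => DFn f j i y * Fin' f i y) x (Pi.single j 1) := by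
          rw [ibp_core hW1 hv1 hv1s (Pi.single j 1), neg_neg]
      _ = ∫ x, (Wfn ψ x * (fderiv ℝ (DFn f j j) x (Pi.single i 1) * Fin' f i x)
            + Wfn ψ x * (DFn f j i x * DFn f i j x)) := by
          simp_rw [hdv, mul_add]
      _ = _ := integral_add (intD2 i j) (intTr i j)
  -- Assemble
  have assemble : (∫ x, Wfn ψ x * TTn ψ f x ^ 2)
      = (∑ i, ∑ j, ∫ x, Wfn ψ x *
          (Fin' f i x * fderiv ℝ (DPsi ψ j) x (Pi.single i 1) * Fin' f j x))
        + ∑ i, ∑ j, ∫ x, Wfn ψ x * (DFn f j i x * DFn f i j x) := by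
    rw [stepA]
    rw [← Finset.sum_add_distrib]
    refine Finset.sum_congr rfl fun i _ => ?_
    rw [stepB i]
    have : (∑ j, ∫ x, DPsi ψ j x * DFn f j i x * (Fin' f i x * Wfn ψ x))
        = (∑ j, ∫ x, Wfn ψ x * (fderiv ℝ (DFn f j j) x (Pi.single i 1) * Fin' f i x))
          + ∑ j, ∫ x, Wfn ψ x * (DFn f j i x * DFn f i j x) := by
      rw [← Finset.sum_add_distrib]
      exact Finset.sum_congr rfl fun j _ => stepC i j
    rw [this]
    ring
  -- rewrite RHS of the goal
  have rhs : (∫ x, Wfn ψ x *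
        ((∑ i, ∑ j, Fin' f i x * fderiv ℝ (DPsi ψ j) x (Pi.single i 1) * Fin' f j x)
          + ∑ i, ∑ j, DFn f i j x * DFn f j i x))
      = (∑ i, ∑ j, ∫ x, Wfn ψ x *
          (Fin' f i x * fderiv ℝ (DPsi ψ j) x (Pi.single i 1) * Fin' f j x))
        + ∑ i, ∑ j, ∫ x, Wfn ψ x * (DFn f i j x * DFn f j i x) := by
    have e3 : ∀ x, Wfn ψ x *
        ((∑ i, ∑ j, Fin' f i x * fderiv ℝ (DPsi ψ j) x (Pi.single i 1) * Fin' f j x)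
          + ∑ i, ∑ j, DFn f i j x * DFn f j i x)
        = (∑ i, ∑ j, Wfn ψ x *
            (Fin' f i x * fderiv ℝ (DPsi ψ j) x (Pi.single i 1) * Fin' f j x))
          + ∑ i, ∑ j, Wfn ψ x * (DFn f i j x * DFn f j i x) := by
      intro x
      rw [mul_add, Finset.mul_sum, Finset.mul_sum]
      congr 1
      · exact Finset.sum_congr rfl fun i _ => Finset.mul_sum _ _ _
      · exact Finset.sum_congr rfl fun i _ => Finset.mul_sum _ _ _
    simp_rw [e3]
    rw [integral_add (integrable_finset_sum _ fun i _ => integrable_finset_sum _ fun j _ => intHH i j)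
      (integrable_finset_sum _ fun i _ => integrable_finset_sum _ fun j _ => intTr j i),
      integral_finset_sum _ (fun i _ => integrable_finset_sum _ fun j _ => intHH i j),
      integral_finset_sum _ (fun i _ => integrable_finset_sum _ fun j _ => intTr j i)]
    congr 1
    · exact Finset.sum_congr rfl fun i _ => integral_finset_sum _ fun j _ => intHH i j
    · exact Finset.sum_congr rfl fun i _ => integral_finset_sum _ fun j _ => intTr j i
  rw [assemble, rhs]
  congr 1
  rw [Finset.sum_comm]


end SteinAuxiliary

/-- Non-Gaussian Second Order Stein formula: if `z` has density `exp(-ψ)` with `ψ` twice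
continuously differentiable, and `f : ℝⁿ → ℝⁿ` is smooth with compact support, then
`E[(∇ψ(z)ᵀ f(z) - div f(z))²] = E[f(z)ᵀ (∇²ψ(z)) f(z) + tr((∇f(z))²)]`. -/
theorem second_order_stein_nongaussian (n : ℕ)
    (ψ : (Fin n → ℝ) → ℝ) (hψ : ContDiff ℝ 2 ψ)
    (hprob : IsProbabilityMeasure
      ((volume : Measure (Fin n → ℝ)).withDensity fun x => ENNReal.ofReal (Real.exp (-ψ x))))
    (f : (Fin n → ℝ) → (Fin n → ℝ))
    (hf : ContDiff ℝ (⊤ : ℕ∞) f) (hfsupp : HasCompactSupport f) :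
    let μ : Measure (Fin n → ℝ) :=
      (volume : Measure (Fin n → ℝ)).withDensity fun x => ENNReal.ofReal (Real.exp (-ψ x))
    (∫ z, ((∑ i, fderiv ℝ ψ z (Pi.single i 1) * f z i) -
          ∑ i, fderiv ℝ (fun y => f y i) z (Pi.single i 1)) ^ 2 ∂μ) =
      ∫ z, ((∑ i, ∑ j, f z i *
            fderiv ℝ (fun y => fderiv ℝ ψ y (Pi.single j 1)) z (Pi.single i 1) * f z j) +
          ∑ i, ∑ j, fderiv ℝ (fun y => f y i) z (Pi.single j 1) *
            fderiv ℝ (fun y => f y j) z (Pi.single i 1)) ∂μ := by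
  intro μ
  have hf3 : ContDiff ℝ 3 f := hf.of_le (WithTop.coe_le_coe.mpr le_top)
  have hconv : ∀ (g : (Fin n → ℝ) → ℝ),
      (∫ z, g z ∂((volume : Measure (Fin n → ℝ)).withDensity
          fun x => ENNReal.ofReal (Real.exp (-ψ x)))) = ∫ z, Wfn ψ z * g z := by
    intro g
    have hmeas : Measurable fun x => Real.toNNReal (Real.exp (-ψ x)) :=
      (Real.continuous_exp.comp hψ.continuous.neg).measurable.real_toNNReal
    rw [show (fun x => ENNReal.ofReal (Real.exp (-ψ x)))
        = fun x => ((Real.toNNReal (Real.exp (-ψ x)) : NNReal) : ENNReal) from rfl,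
      integral_withDensity_eq_integral_smul hmeas g]
    congr 1
    funext z
    simp [NNReal.smul_def, Real.coe_toNNReal _ (Real.exp_nonneg _), Wfn]
  show (∫ z, ((∑ i, fderiv ℝ ψ z (Pi.single i 1) * f z i) -
          ∑ i, fderiv ℝ (fun y => f y i) z (Pi.single i 1)) ^ 2
        ∂((volume : Measure (Fin n → ℝ)).withDensity
          fun x => ENNReal.ofReal (Real.exp (-ψ x)))) =
      ∫ z, ((∑ i, ∑ j, f z i *
            fderiv ℝ (fun y => fderiv ℝ ψ y (Pi.single j 1)) z (Pi.single i 1) * f z j) +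
          ∑ i, ∑ j, fderiv ℝ (fun y => f y i) z (Pi.single j 1) *
            fderiv ℝ (fun y => f y j) z (Pi.single i 1))
        ∂((volume : Measure (Fin n → ℝ)).withDensity
          fun x => ENNReal.ofReal (Real.exp (-ψ x)))
  rw [hconv, hconv]
  exact main_core ψ hψ f hf3 hfsupp
end

section
/- The function x ↦ x · log(e p / max(x, 1)) is concave on [0, p] for every integer p ≥ 1. Consequently, for any random variable X taking values in [0, p], E[X log(ep / max(X, 1))] ≤ E[X] · log(ep / max(E[X], 1)). -/
/-!
Writing `m = max x 1`, one has `x log(c / m) = x log c - m log m`: a linear function minus the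
composition of the convex nondecreasing map `t ↦ t log t` on `[1, ∞)` with the convex map
`x ↦ max x 1`. So the function is concave on all of `ℝ`, and the inequality is Jensen's for a
continuous concave function of a bounded random variable.
-/

open MeasureTheory Real Set

lemma range_max_one : range (fun x : ℝ => max x 1) = Ici 1 := by
  ext y
  constructor
  · rintro ⟨x, rfl⟩
    exact le_max_right x 1
  · intro hy
    exact ⟨y, max_eq_left hy⟩

lemma convexOn_max_one_mul_log :
    ConvexOn ℝ univ (fun x : ℝ => max x 1 * log (max x 1)) := by
  have hmax : ConvexOn ℝ univ (fun x : ℝ => max x 1) :=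
    (convexOn_id convex_univ).sup (convexOn_const 1 convex_univ)
  have hone_le : Ici (1 : ℝ) ⊆ Ici (exp (-1)) :=
    Ici_subset_Ici.2 (exp_le_one_iff.2 (by norm_num))
  refine ConvexOn.comp (g := fun x : ℝ => x * log x) ?_ hmax ?_
  · rw [image_univ, range_max_one]
    exact convexOn_mul_log.subset (Ici_subset_Ici.2 zero_le_one) (convex_Ici 1)
  · rw [image_univ, range_max_one]
    exact mul_log_strictMonoOn.monotoneOn.mono hone_le

/-- Below `1` the factor `x` multiplies `log 1 = 0`, so it may be replaced by `max x 1`. -/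
lemma mul_log_div_max_one {c : ℝ} (hc : c ≠ 0) (x : ℝ) :
    x * log (c / max x 1) = log c * x - max x 1 * log (max x 1) := by
  have hm : max x 1 ≠ 0 := (zero_lt_one.trans_le (le_max_right x 1)).ne'
  rw [log_div hc hm]
  rcases le_total x 1 with hx | hx
  · rw [max_eq_right hx, log_one]
    ring
  · rw [max_eq_left hx]
    ring

lemma concaveOn_mul_log_div_max_one {c : ℝ} (hc : c ≠ 0) :
    ConcaveOn ℝ univ (fun x : ℝ => x * log (c / max x 1)) := by
  simp only [mul_log_div_max_one hc]
  exact ((LinearMap.mulLeft ℝ (log c)).concaveOn convex_univ).sub convexOn_max_one_mul_log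

lemma continuous_mul_log_div_max_one {c : ℝ} (hc : c ≠ 0) :
    Continuous (fun x : ℝ => x * log (c / max x 1)) := by
  simp only [mul_log_div_max_one hc]
  exact (continuous_const.mul continuous_id).sub
    (continuous_mul_log.comp (continuous_id.max continuous_const))

/-- The function `x ↦ x log(ep / (x ∨ 1))` is concave on `[0, p]` for every integer `p ≥ 1`;
consequently, by Jensen's inequality, for any random variable `X` with values in `[0, p]`,
`E[X log(ep / (X ∨ 1))] ≤ E[X] log(ep / (E[X] ∨ 1))`. -/
theorem concave_xlog_and_jensen (p : ℕ) (hp : 1 ≤ p)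
    {Ω : Type*} [MeasurableSpace Ω] (P : Measure Ω) [IsProbabilityMeasure P]
    (X : Ω → ℝ) (hX : Measurable X)
    (hrange : ∀ ω, X ω ∈ Set.Icc (0 : ℝ) p) :
    ConcaveOn ℝ (Set.Icc (0 : ℝ) p)
        (fun x => x * Real.log (Real.exp 1 * p / max x 1)) ∧
      (∫ ω, X ω * Real.log (Real.exp 1 * p / max (X ω) 1) ∂P) ≤
        (∫ ω, X ω ∂P) * Real.log (Real.exp 1 * p / max (∫ ω, X ω ∂P) 1) := by
  have hc : exp 1 * p ≠ 0 := by positivity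
  have hconc := (concaveOn_mul_log_div_max_one hc).subset (subset_univ _) (convex_Icc 0 (p : ℝ))
  have hcont := continuous_mul_log_div_max_one hc
  have hXi : Integrable X P := .of_mem_Icc 0 p hX.aemeasurable (ae_of_all _ hrange)
  have hfXi : Integrable (fun ω => X ω * log (exp 1 * p / max (X ω) 1)) P := by
    obtain ⟨C, hC⟩ := isCompact_Icc.exists_bound_of_continuousOn hcont.continuousOn
    exact .of_bound (hcont.measurable.comp hX).aestronglyMeasurable C
      (ae_of_all _ fun ω => hC _ (hrange ω))
  exact ⟨hconc, hconc.le_map_integral hcont.continuousOn isClosed_Icc (ae_of_all _ hrange) hXi hfXi⟩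
end
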